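/- arXiv:2001.03500 — 12 statements merged into one kernel-verified Lean document; each statement's English description precedes it below -/
import Mathlib

section
/- For every positive integer k and every digraph D with no isolated vertex, the total k-rainbow domination number satisfies γ_trk(D) ≤ (k+1)·γ(D), where γ(D) is the domination number of D. -/
open Finset

/-- No isolated vertex: every vertex has an in-neighbor or an out-neighbor. -/
def NoIsolated {V : Type*} (Adj : V → V → Prop) : Prop :=
  ∀ v, ∃ u, Adj u v ∨ Adj v u

/-- A `k`-rainbow dominating function on a digraph. -/
def IsKRDF {V : Type*} (k : ℕ) (Adj : V → V → Prop) (f : V → Finset (Fin k)) : Prop :=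
  ∀ v, f v = ∅ → ∀ c : Fin k, ∃ u, Adj u v ∧ c ∈ f u

/-- A total `k`-rainbow dominating function on a digraph. -/
def IsTkRDF {V : Type*} (k : ℕ) (Adj : V → V → Prop) (f : V → Finset (Fin k)) : Prop :=
  IsKRDF k Adj f ∧
    ∀ v, f v ≠ ∅ → ∃ u, u ≠ v ∧ f u ≠ ∅ ∧ (Adj u v ∨ Adj v u)

/-- The `k`-rainbow domination number. -/
noncomputable def krdNum {V : Type*} [Fintype V] (k : ℕ) (Adj : V → V → Prop) : ℕ :=
  sInf {w | ∃ f : V → Finset (Fin k), IsKRDF k Adj f ∧ ∑ v, (f v).card = w}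

/-- The total `k`-rainbow domination number. -/
noncomputable def tkRainbow {V : Type*} [Fintype V] (k : ℕ) (Adj : V → V → Prop) : ℕ :=
  sInf {w | ∃ f : V → Finset (Fin k), IsTkRDF k Adj f ∧ ∑ v, (f v).card = w}

/-- A dominating set of a digraph. -/
def IsDomSet {V : Type*} (Adj : V → V → Prop) (S : Finset V) : Prop :=
  ∀ v, v ∉ S → ∃ u ∈ S, Adj u v

/-- The domination number. -/
noncomputable def domNum {V : Type*} [Fintype V] (Adj : V → V → Prop) : ℕ :=
  sInf {m | ∃ S : Finset V, IsDomSet Adj S ∧ S.card = m}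

/-- A total dominating set of a digraph. -/
def IsTDSet {V : Type*} (Adj : V → V → Prop) (S : Finset V) : Prop :=
  IsDomSet Adj S ∧ ∀ v ∈ S, ∃ u ∈ S, u ≠ v ∧ (Adj u v ∨ Adj v u)

/-- The total domination number. -/
noncomputable def totalDomNum {V : Type*} [Fintype V] (Adj : V → V → Prop) : ℕ :=
  sInf {m | ∃ S : Finset V, IsTDSet Adj S ∧ S.card = m}

/-- The underlying (undirected) simple graph of a digraph. -/
def underlying {V : Type*} (Adj : V → V → Prop) : SimpleGraph V where
  Adj u v := u ≠ v ∧ (Adj u v ∨ Adj v u)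
  symm := ⟨fun u v ⟨h1, h2⟩ => ⟨h1.symm, h2.symm⟩⟩
  loopless := ⟨fun v h => h.1 rfl⟩

/-- Maximum out-degree. -/
noncomputable def maxOutDeg {V : Type*} [Fintype V] (Adj : V → V → Prop) : ℕ :=
  Finset.univ.sup fun v => Nat.card {u | Adj v u}

/-- Maximum in-degree. -/
noncomputable def maxInDeg {V : Type*} [Fintype V] (Adj : V → V → Prop) : ℕ :=
  Finset.univ.sup fun v => Nat.card {u | Adj u v}

/-- The Cartesian product `P_m □ P_n` of two directed paths. -/
def pathProdAdj (m n : ℕ) : Fin m × Fin n → Fin m × Fin n → Prop :=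
  fun p q => (p.1 = q.1 ∧ (p.2 : ℕ) + 1 = (q.2 : ℕ)) ∨
    (p.2 = q.2 ∧ (p.1 : ℕ) + 1 = (q.1 : ℕ))

theorem total_krainbow_le_kplus1_mul_dom
    {V : Type*} [Fintype V] [DecidableEq V] (Adj : V → V → Prop)
    (k : ℕ) (hk : 0 < k) (hirr : Irreflexive Adj) (hiso : NoIsolated Adj) :
    tkRainbow k Adj ≤ (k + 1) * domNum Adj := by
  classical
  have hne : {m | ∃ S : Finset V, IsDomSet Adj S ∧ S.card = m}.Nonempty :=
    ⟨(Finset.univ : Finset V).card, Finset.univ,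
      fun v hv => absurd (Finset.mem_univ v) hv, rfl⟩
  obtain ⟨S, hS, hcard⟩ := Nat.sInf_mem hne
  choose n hn using hiso
  have hnne : ∀ v, n v ≠ v := by
    intro v h
    rcases hn v with h1 | h1 <;> rw [h] at h1 <;> exact hirr v h1
  set T : Finset V := S.image n with hT
  set f : V → Finset (Fin k) :=
    fun v => if v ∈ S then Finset.univ else if v ∈ T then {⟨0, hk⟩} else ∅ with hf
  have hfS : ∀ v ∈ S, f v = Finset.univ := fun v hv => by simp [hf, hv]
  have hTkRDF : IsTkRDF k Adj f := by
    constructor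
    · intro v hv c
      have hvS : v ∉ S := by
        intro h
        rw [hfS v h] at hv
        have : (⟨0, hk⟩ : Fin k) ∈ (∅ : Finset (Fin k)) := hv ▸ Finset.mem_univ _
        simp at this
      obtain ⟨u, hu, hadj⟩ := hS v hvS
      exact ⟨u, hadj, by rw [hfS u hu]; exact Finset.mem_univ c⟩
    · intro v hv
      by_cases hvS : v ∈ S
      · refine ⟨n v, hnne v, ?_, hn v⟩
        have hnT : n v ∈ T := Finset.mem_image.mpr ⟨v, hvS, rfl⟩
        by_cases h2 : n v ∈ S
        · rw [hfS _ h2]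
          exact fun h => by
            have : (⟨0, hk⟩ : Fin k) ∈ (∅ : Finset (Fin k)) := h ▸ Finset.mem_univ _
            simp at this
        · simp [hf, h2, hnT]
      · have hvT : v ∈ T := by
          by_contra h
          exact hv (by simp [hf, hvS, h])
        obtain ⟨s, hs, hsv⟩ := Finset.mem_image.mp hvT
        refine ⟨s, fun h => hvS (h ▸ hs), ?_, ?_⟩
        · rw [hfS s hs]
          exact fun h => by
            have : (⟨0, hk⟩ : Fin k) ∈ (∅ : Finset (Fin k)) := h ▸ Finset.mem_univ _
            simp at this
        · rcases hn s with h1 | h1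
          · exact Or.inr (hsv ▸ h1)
          · exact Or.inl (hsv ▸ h1)
  have hsum : ∑ v, (f v).card ≤ (k + 1) * S.card := by
    have hzero : ∀ v ∈ Finset.univ, v ∉ S ∪ T → (f v).card = 0 := by
      intro v _ hv
      rw [Finset.mem_union] at hv
      push_neg at hv
      simp [hf, hv.1, hv.2]
    have h1 : ∑ v, (f v).card = ∑ v ∈ S ∪ T, (f v).card :=
      (Finset.sum_subset (Finset.subset_univ _) hzero).symm
    have h2 : S ∪ T = S ∪ (T \ S) := by
      rw [Finset.union_sdiff_self_eq_union]
    have hdisj : Disjoint S (T \ S) := Finset.disjoint_sdiff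
    have h3 : ∑ v ∈ S ∪ (T \ S), (f v).card
        = ∑ v ∈ S, (f v).card + ∑ v ∈ T \ S, (f v).card :=
      Finset.sum_union hdisj
    have h4 : ∑ v ∈ S, (f v).card = k * S.card := by
      rw [Finset.sum_congr rfl (fun v hv => by rw [hfS v hv])]
      simp [Finset.card_univ, mul_comm]
    have h5 : ∑ v ∈ T \ S, (f v).card ≤ S.card := by
      have : ∀ v ∈ T \ S, (f v).card ≤ 1 := by
        intro v hv
        rw [Finset.mem_sdiff] at hv
        simp [hf, hv.1, hv.2]
      calc ∑ v ∈ T \ S, (f v).card ≤ ∑ _v ∈ T \ S, 1 := Finset.sum_le_sum this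
        _ = (T \ S).card := by simp
        _ ≤ T.card := Finset.card_le_card (Finset.sdiff_subset)
        _ ≤ S.card := Finset.card_image_le
    calc ∑ v, (f v).card = ∑ v ∈ S, (f v).card + ∑ v ∈ T \ S, (f v).card := by
          rw [h1, h2, h3]
      _ ≤ k * S.card + S.card := Nat.add_le_add (le_of_eq h4) h5
      _ = (k + 1) * S.card := by ring
  have hmem : ∑ v, (f v).card ∈
      {w | ∃ g : V → Finset (Fin k), IsTkRDF k Adj g ∧ ∑ v, (g v).card = w} :=
    ⟨f, hTkRDF, rfl⟩
  calc tkRainbow k Adj ≤ ∑ v, (f v).card := Nat.sInf_le hmem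
    _ ≤ (k + 1) * S.card := hsum
    _ = (k + 1) * domNum Adj := by rw [hcard]; rfl
end

section
/- Let k be a positive integer and D a digraph with no isolated vertex. If γ_trk(D) = (k+1)·γ(D), then every minimum dominating set S of D is a packing, i.e., N⁺[u] ∩ N⁺[v] = ∅ for all distinct u, v ∈ S. -/
open Finset

theorem min_dom_set_is_packing_of_eq
    {V : Type*} [Fintype V] [DecidableEq V] (Adj : V → V → Prop)
    (k : ℕ) (hk : 0 < k) (hirr : Irreflexive Adj) (hiso : NoIsolated Adj)
    (heq : tkRainbow k Adj = (k + 1) * domNum Adj) :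
    ∀ S : Finset V, IsDomSet Adj S → S.card = domNum Adj →
      ∀ u ∈ S, ∀ v ∈ S, u ≠ v →
        ∀ w, ¬ ((Adj u w ∨ w = u) ∧ (Adj v w ∨ w = v)) := by
  intro S hS hcard u hu v hv huv w hw
  obtain ⟨hw1, hw2⟩ := hw
  classical
  -- choice of a neighbor for each vertex
  set t : V → V := fun s => Classical.choose (hiso s) with ht
  have htadj : ∀ s, Adj (t s) s ∨ Adj s (t s) :=
    fun s => Classical.choose_spec (hiso s)
  have htne : ∀ s, t s ≠ s := by
    intro s h
    rcases htadj s with h' | h' <;> rw [h] at h' <;> exact hirr s h'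
  set W : Finset V := insert w ((S \ {u, v}).image t) with hW
  set f : V → Finset (Fin k) := fun x =>
    if x ∈ S then Finset.univ else if x ∈ W then {⟨0, hk⟩} else ∅ with hf
  have hfS : ∀ x ∈ S, f x = Finset.univ := by
    intro x hx; simp [hf, hx]
  have hne_univ : (Finset.univ : Finset (Fin k)) ≠ ∅ := by
    intro h
    have : (⟨0, hk⟩ : Fin k) ∈ (Finset.univ : Finset (Fin k)) := Finset.mem_univ _
    rw [h] at this; exact absurd this (Finset.notMem_empty _)
  have hfSne : ∀ x ∈ S, f x ≠ ∅ := by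
    intro x hx; rw [hfS x hx]; exact hne_univ
  have hfWne : ∀ x ∈ W, f x ≠ ∅ := by
    intro x hx
    by_cases hxS : x ∈ S
    · exact hfSne x hxS
    · simp only [hf, if_neg hxS, if_pos hx]
      simp
  have hwW : w ∈ W := Finset.mem_insert_self _ _
  have htW : ∀ s ∈ S \ ({u, v} : Finset V), t s ∈ W :=
    fun s hs => Finset.mem_insert_of_mem (Finset.mem_image_of_mem t hs)
  -- totality witness for u
  have hadj_u : ∃ x, x ≠ u ∧ f x ≠ ∅ ∧ (Adj x u ∨ Adj u x) := by
    rcases hw1 with h1 | h1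
    · by_cases hwv : w = v
      · exact ⟨v, fun h => huv h.symm, hfSne v hv, Or.inr (hwv ▸ h1)⟩
      · refine ⟨w, ?_, hfWne w hwW, Or.inr h1⟩
        intro h; rw [h] at h1; exact hirr u h1
    · rcases hw2 with h2 | h2
      · exact ⟨v, fun h => huv h.symm, hfSne v hv, Or.inl (h1 ▸ h2)⟩
      · exact absurd (h1.symm.trans h2) huv
  have hadj_v : ∃ x, x ≠ v ∧ f x ≠ ∅ ∧ (Adj x v ∨ Adj v x) := by
    rcases hw2 with h2 | h2
    · by_cases hwu : w = u
      · exact ⟨u, huv, hfSne u hu, Or.inr (hwu ▸ h2)⟩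
      · refine ⟨w, ?_, hfWne w hwW, Or.inr h2⟩
        intro h; rw [h] at h2; exact hirr v h2
    · rcases hw1 with h1 | h1
      · exact ⟨u, huv, hfSne u hu, Or.inl (h2 ▸ h1)⟩
      · exact absurd (h1.symm.trans h2) huv
  have hTkRDF : IsTkRDF k Adj f := by
    constructor
    · intro x hx c
      have hxS : x ∉ S := by
        intro h; exact hfSne x h hx
      obtain ⟨s, hsS, hsadj⟩ := hS x hxS
      exact ⟨s, hsadj, by rw [hfS s hsS]; exact Finset.mem_univ c⟩
    · intro x hx
      by_cases hxS : x ∈ S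
      · by_cases hxu : x = u
        · subst hxu; exact hadj_u
        · by_cases hxv : x = v
          · subst hxv; exact hadj_v
          · have hxd : x ∈ S \ ({u, v} : Finset V) := by
              simp [Finset.mem_sdiff, hxS, hxu, hxv]
            refine ⟨t x, htne x, hfWne _ (htW x hxd), ?_⟩
            rcases htadj x with h | h
            · exact Or.inl h
            · exact Or.inr h
      · have hxW : x ∈ W := by
          by_contra hxW
          apply hx; simp [hf, hxS, hxW]
        rcases Finset.mem_insert.mp hxW with hxw | hxi
        · subst hxw
          rcases hw1 with h1 | h1
          · exact ⟨u, fun h => hxS (h ▸ hu), hfSne u hu, Or.inl h1⟩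
          · exact absurd (h1 ▸ hu) hxS
        · obtain ⟨s, hs, hts⟩ := Finset.mem_image.mp hxi
          have hsS : s ∈ S := (Finset.mem_sdiff.mp hs).1
          refine ⟨s, ?_, hfSne s hsS, ?_⟩
          · intro h; exact htne s (hts.trans h.symm)
          · rcases htadj s with h | h
            · exact Or.inr (hts ▸ h)
            · exact Or.inl (hts ▸ h)
  -- cardinality bounds
  have hcard2 : ({u, v} : Finset V).card = 2 := Finset.card_pair huv
  have hsubUV : ({u, v} : Finset V) ⊆ S := by
    intro x hx; rcases Finset.mem_insert.mp hx with h | h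
    · exact h ▸ hu
    · exact (Finset.mem_singleton.mp h) ▸ hv
  have hS2 : 2 ≤ S.card := hcard2 ▸ Finset.card_le_card hsubUV
  have hWcard : W.card ≤ S.card - 1 := by
    have h1 : W.card ≤ ((S \ ({u, v} : Finset V)).image t).card + 1 :=
      Finset.card_insert_le _ _
    have h2 : ((S \ ({u, v} : Finset V)).image t).card ≤ (S \ ({u, v} : Finset V)).card :=
      Finset.card_image_le
    have h3 : (S \ ({u, v} : Finset V)).card = S.card - 2 := by
      rw [Finset.card_sdiff_of_subset hsubUV, hcard2]
    omega
  have hsum : ∑ x, (f x).card ≤ k * S.card + W.card := by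
    have hpt : ∀ x, (f x).card ≤ (if x ∈ S then k else 0) + (if x ∈ W then 1 else 0) := by
      intro x
      by_cases hxS : x ∈ S
      · simp [hf, hxS, Finset.card_univ]
      · by_cases hxW : x ∈ W
        · simp [hf, hxS, hxW]
        · simp [hf, hxS, hxW]
    calc ∑ x, (f x).card
        ≤ ∑ x, ((if x ∈ S then k else 0) + (if x ∈ W then 1 else 0)) :=
          Finset.sum_le_sum fun x _ => hpt x
      _ = (∑ x, if x ∈ S then k else 0) + (∑ x, if x ∈ W then 1 else 0) :=
          Finset.sum_add_distrib
      _ = k * S.card + W.card := by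
          rw [Finset.sum_ite_mem, Finset.sum_ite_mem, Finset.univ_inter, Finset.univ_inter,
            Finset.sum_const, Finset.sum_const, smul_eq_mul, smul_eq_mul, mul_one, mul_comm]
  have hle : tkRainbow k Adj ≤ ∑ x, (f x).card :=
    Nat.sInf_le ⟨f, hTkRDF, rfl⟩
  rw [heq, ← hcard] at hle
  have hexp : (k + 1) * S.card = k * S.card + S.card := by ring
  omega
end

section
/- Let k be a positive integer and D a digraph of order n ≥ k with no isolated vertex. Then γ_trk(D) = γ_t(D) if and only if there exists a minimum total dominating set X of D which can be partitioned into k nonempty subsets X₁,…,X_k such that for each i ∈ {1,…,k}, every vertex of V(D) \ X has an in-neighbor in X_i. -/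
open Finset

section Aux
variable {V : Type*} [Fintype V] [DecidableEq V] {Adj : V → V → Prop} {k : ℕ}

/-- Splitting a finite type of card ≥ k into k nonempty disjoint parts covering univ. -/
lemma exists_partition (hk : 0 < k) (hn : k ≤ Fintype.card V) :
    ∃ P : Fin k → Finset V, (∀ i, P i ≠ ∅) ∧ (∀ i j, i ≠ j → Disjoint (P i) (P j)) ∧
      Finset.univ.biUnion P = Finset.univ := by
  classical
  obtain ⟨g⟩ : Nonempty (Fin k ↪ V) := by
    apply Function.Embedding.nonempty_of_card_le; simpa using hn
  set last : Fin k := ⟨k - 1, Nat.sub_lt hk one_pos⟩ with hlast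
  set R : Finset V := Finset.univ \ ((Finset.univ.erase last).image g) with hR
  refine ⟨fun i => if i = last then R else {g i}, ?_, ?_, ?_⟩
  · intro i
    by_cases h : i = last
    · simp only [h, if_pos rfl]
      have hcard : ((Finset.univ.erase last).image g).card = k - 1 := by
        rw [Finset.card_image_of_injective _ g.injective, Finset.card_erase_of_mem (mem_univ _),
          Finset.card_univ, Fintype.card_fin]
      have : 0 < R.card := by
        rw [hR, Finset.card_sdiff_of_subset (Finset.subset_univ _), hcard, Finset.card_univ]
        omega
      exact Finset.card_pos.mp this |>.ne_empty
    · simp [h]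
  · intro i j hij
    by_cases hi : i = last <;> by_cases hj : j = last
    · exact absurd (hi.trans hj.symm) hij
    · simp only [hi, if_pos rfl, hj, if_neg hj, if_true, if_false]
      rw [Finset.disjoint_singleton_right]
      simp only [hR, Finset.mem_sdiff, mem_univ, true_and, not_not]
      exact Finset.mem_image_of_mem g (Finset.mem_erase.mpr ⟨hj, mem_univ _⟩)
    · simp only [hj, if_pos rfl, hi, if_neg hi, if_true, if_false]
      rw [Finset.disjoint_singleton_left]
      simp only [hR, Finset.mem_sdiff, mem_univ, true_and, not_not]
      exact Finset.mem_image_of_mem g (Finset.mem_erase.mpr ⟨hi, mem_univ _⟩)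
    · simp only [if_neg hi, if_neg hj, Finset.disjoint_singleton_left,
        Finset.mem_singleton]
      exact fun h => hij (g.injective h)
  · apply Finset.eq_univ_of_forall
    intro v
    rw [Finset.mem_biUnion]
    by_cases h : v ∈ (Finset.univ.erase last).image g
    · obtain ⟨i, hi, rfl⟩ := Finset.mem_image.mp h
      exact ⟨i, mem_univ _, by simp [Finset.ne_of_mem_erase hi]⟩
    · exact ⟨last, mem_univ _, by simp [hR, h]⟩

/-- The support of a TkRDF is a total dominating set. -/
lemma support_TD {f : V → Finset (Fin k)} (hf : IsTkRDF k Adj f) (hk : 0 < k) :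
    IsTDSet Adj (Finset.univ.filter (fun v => f v ≠ ∅)) := by
  classical
  constructor
  · intro v hv
    simp only [Finset.mem_filter, mem_univ, true_and, not_not] at hv
    obtain ⟨u, hu, hcu⟩ := hf.1 v hv ⟨0, hk⟩
    refine ⟨u, ?_, hu⟩
    simp only [Finset.mem_filter, mem_univ, true_and]
    exact fun h => by simp [h] at hcu
  · intro v hv
    simp only [Finset.mem_filter, mem_univ, true_and] at hv
    obtain ⟨u, hne, hfu, hadj⟩ := hf.2 v hv
    exact ⟨u, by simp [Finset.mem_filter, hfu], hne, hadj⟩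

lemma card_support_le {f : V → Finset (Fin k)} :
    (Finset.univ.filter (fun v => f v ≠ ∅)).card ≤ ∑ v, (f v).card := by
  classical
  calc (Finset.univ.filter (fun v => f v ≠ ∅)).card
      = ∑ v ∈ Finset.univ.filter (fun v => f v ≠ ∅), 1 := by simp
    _ ≤ ∑ v ∈ Finset.univ.filter (fun v => f v ≠ ∅), (f v).card := by
        apply Finset.sum_le_sum; intro v hv
        simp only [Finset.mem_filter] at hv
        exact Finset.card_pos.mpr (Finset.nonempty_iff_ne_empty.mpr hv.2)
    _ ≤ ∑ v, (f v).card := Finset.sum_le_sum_of_subset (Finset.filter_subset _ _)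

lemma tkRainbow_set_nonempty (hk : 0 < k) (hirr : Irreflexive Adj) (hiso : NoIsolated Adj) :
    {w | ∃ f : V → Finset (Fin k), IsTkRDF k Adj f ∧ ∑ v, (f v).card = w}.Nonempty := by
  refine ⟨_, fun _ => {⟨0, hk⟩}, ⟨fun v hv => absurd hv (by simp), fun v _ => ?_⟩, rfl⟩
  obtain ⟨u, hu⟩ := hiso v
  refine ⟨u, ?_, by simp, hu⟩
  rintro rfl
  exact hu.elim (hirr _) (hirr _)

lemma totalDom_le_tkRainbow (hk : 0 < k) (hirr : Irreflexive Adj) (hiso : NoIsolated Adj) :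
    totalDomNum Adj ≤ tkRainbow k Adj := by
  classical
  obtain ⟨f, hf, hw⟩ := Nat.sInf_mem (tkRainbow_set_nonempty hk hirr hiso)
  calc totalDomNum Adj ≤ (Finset.univ.filter (fun v => f v ≠ ∅)).card :=
        Nat.sInf_le ⟨_, support_TD hf hk, rfl⟩
    _ ≤ ∑ v, (f v).card := card_support_le
    _ = tkRainbow k Adj := hw

end Aux

theorem tkRainbow_eq_totalDom_iff
    {V : Type*} [Fintype V] [DecidableEq V] (Adj : V → V → Prop)
    (k : ℕ) (hk : 0 < k) (hn : k ≤ Fintype.card V)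
    (hirr : Irreflexive Adj) (hiso : NoIsolated Adj) :
    tkRainbow k Adj = totalDomNum Adj ↔
      ∃ X : Finset V, IsTDSet Adj X ∧ X.card = totalDomNum Adj ∧
        ∃ P : Fin k → Finset V,
          (∀ i, P i ≠ ∅) ∧
          (∀ i j, i ≠ j → Disjoint (P i) (P j)) ∧
          Finset.univ.biUnion P = X ∧
          ∀ i : Fin k, ∀ v, v ∉ X → ∃ u ∈ P i, Adj u v := by
  classical
  constructor
  · intro heq
    obtain ⟨f, hf, hw⟩ := Nat.sInf_mem (tkRainbow_set_nonempty (Adj := Adj) hk hirr hiso)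
    set X := Finset.univ.filter (fun v => f v ≠ ∅) with hX
    have hXTD : IsTDSet Adj X := support_TD hf hk
    have hge : totalDomNum Adj ≤ X.card := Nat.sInf_le ⟨X, hXTD, rfl⟩
    have hle : X.card ≤ ∑ v, (f v).card := card_support_le
    have hwt : ∑ v, (f v).card = totalDomNum Adj := hw.trans heq
    have hXcard : X.card = totalDomNum Adj := le_antisymm (hle.trans_eq hwt) hge
    have hmemX : ∀ v, v ∈ X ↔ f v ≠ ∅ := by
      intro v; simp [hX]
    -- each vertex in X has exactly one color
    have hsum : ∑ v ∈ X, (f v).card = ∑ v ∈ X, 1 := by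
      have h1 : ∑ v ∈ X, (f v).card = ∑ v, (f v).card := by
        apply Finset.sum_subset (Finset.filter_subset _ _)
        intro v _ hv
        simp only [hX, Finset.mem_filter, mem_univ, true_and, not_not] at hv
        simp [hv]
      rw [h1, hwt, ← hXcard]
      simp
    have hcard1 : ∀ v ∈ X, (f v).card = 1 := by
      intro v hv
      have hle1 : ∀ u ∈ X, 1 ≤ (f u).card := fun u hu =>
        Finset.card_pos.mpr (Finset.nonempty_iff_ne_empty.mpr ((hmemX u).mp hu))
      exact ((Finset.sum_eq_sum_iff_of_le hle1).mp hsum.symm v hv).symm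
    set P : Fin k → Finset V := fun i => X.filter (fun v => i ∈ f v) with hP
    have hPsub : ∀ i, P i ⊆ X := fun i => Finset.filter_subset _ _
    have hPmem : ∀ i v, v ∈ P i ↔ v ∈ X ∧ i ∈ f v := by
      intro i v; simp [hP]
    have hdisj : ∀ i j, i ≠ j → Disjoint (P i) (P j) := by
      intro i j hij
      rw [Finset.disjoint_left]
      intro v hvi hvj
      obtain ⟨hvX, hi⟩ := (hPmem i v).mp hvi
      obtain ⟨_, hj⟩ := (hPmem j v).mp hvj
      obtain ⟨a, ha⟩ := Finset.card_eq_one.mp (hcard1 v hvX)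
      rw [ha, Finset.mem_singleton] at hi hj
      exact hij (hi.trans hj.symm)
    have hunion : Finset.univ.biUnion P = X := by
      apply Finset.Subset.antisymm
      · intro v hv
        rw [Finset.mem_biUnion] at hv
        obtain ⟨i, _, hvi⟩ := hv
        exact hPsub i hvi
      · intro v hv
        obtain ⟨i, hi⟩ := Finset.nonempty_iff_ne_empty.mpr ((hmemX v).mp hv)
        exact Finset.mem_biUnion.mpr ⟨i, mem_univ _, (hPmem i v).mpr ⟨hv, hi⟩⟩
    by_cases hne : ∀ i, P i ≠ ∅
    · refine ⟨X, hXTD, hXcard, P, hne, hdisj, hunion, ?_⟩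
      intro i v hv
      have hfv : f v = ∅ := by
        by_contra h
        exact hv ((hmemX v).mpr h)
      obtain ⟨u, hu, hcu⟩ := hf.1 v hfv i
      refine ⟨u, (hPmem i u).mpr ⟨(hmemX u).mpr ?_, hcu⟩, hu⟩
      exact fun h => by simp [h] at hcu
    · -- some color missing, then X = univ
      push_neg at hne
      obtain ⟨i0, hi0⟩ := hne
      have hXuniv : X = Finset.univ := by
        apply Finset.eq_univ_of_forall
        intro v
        by_contra hv
        have hfv : f v = ∅ := by
          by_contra h
          exact hv ((hmemX v).mpr h)
        obtain ⟨u, hu, hcu⟩ := hf.1 v hfv i0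
        have : u ∈ P i0 := (hPmem i0 u).mpr ⟨(hmemX u).mpr (fun h => by simp [h] at hcu), hcu⟩
        rw [hi0] at this
        exact absurd this (Finset.notMem_empty u)
      obtain ⟨Q, hQne, hQdisj, hQunion⟩ := exists_partition (V := V) hk hn
      refine ⟨X, hXTD, hXcard, Q, hQne, hQdisj, by rw [hQunion, hXuniv], ?_⟩
      intro i v hv
      rw [hXuniv] at hv
      exact absurd (mem_univ v) hv
  · rintro ⟨X, hXTD, hXcard, P, hPne, hPdisj, hPunion, hPdom⟩
    have hPsub : ∀ i, P i ⊆ X := by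
      intro i
      rw [← hPunion]
      exact Finset.subset_biUnion_of_mem P (mem_univ i)
    set f : V → Finset (Fin k) := fun v => Finset.univ.filter (fun i => v ∈ P i) with hfdef
    have hfX : ∀ v, f v ≠ ∅ ↔ v ∈ X := by
      intro v
      rw [← Finset.nonempty_iff_ne_empty]
      constructor
      · rintro ⟨i, hi⟩
        simp only [hfdef, Finset.mem_filter] at hi
        exact hPsub i hi.2
      · intro hv
        rw [← hPunion, Finset.mem_biUnion] at hv
        obtain ⟨i, _, hvi⟩ := hv
        exact ⟨i, by simp [hfdef, hvi]⟩
    have hfTk : IsTkRDF k Adj f := by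
      constructor
      · intro v hv c
        have hvX : v ∉ X := fun h => ((hfX v).mpr h) hv
        obtain ⟨u, hu, hadj⟩ := hPdom c v hvX
        exact ⟨u, hadj, by simp [hfdef, hu]⟩
      · intro v hv
        obtain ⟨u, huX, hune, hadj⟩ := hXTD.2 v ((hfX v).mp hv)
        exact ⟨u, hune, (hfX u).mpr huX, hadj⟩
    have hweight : ∑ v, (f v).card = X.card := by
      have h1 : ∀ v, (f v).card = ∑ i : Fin k, if v ∈ P i then 1 else 0 :=
        fun v => Finset.card_filter _ _
      calc ∑ v, (f v).card = ∑ v, ∑ i : Fin k, if v ∈ P i then 1 else 0 := by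
            exact Finset.sum_congr rfl fun v _ => h1 v
        _ = ∑ i : Fin k, ∑ v, if v ∈ P i then 1 else 0 := Finset.sum_comm
        _ = ∑ i : Fin k, (P i).card := by
            apply Finset.sum_congr rfl
            intro i _
            rw [← Finset.card_filter]
            congr 1
            exact Finset.filter_univ_mem (P i)
        _ = X.card := by
            rw [← hPunion, Finset.card_biUnion (fun i _ j _ hij => hPdisj i j hij)]
    have hle : tkRainbow k Adj ≤ totalDomNum Adj := by
      rw [← hXcard, ← hweight]
      exact Nat.sInf_le ⟨f, hfTk, rfl⟩
    exact le_antisymm hle (totalDom_le_tkRainbow hk hirr hiso)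
end

section
/- Let k be a positive integer and D a digraph of order n ≥ k with no isolated vertex. Then γ_trk(D) = k·γ_t(D) if and only if there exists a minimum-weight total k-rainbow dominating function f on D such that for each vertex v, either f(v) = {1,…,k} or f(v) = ∅. -/
open Finset

theorem tkRainbow_eq_k_mul_totalDom_iff
    {V : Type*} [Fintype V] [DecidableEq V] (Adj : V → V → Prop)
    (k : ℕ) (hk : 0 < k) (hn : k ≤ Fintype.card V)
    (hirr : Irreflexive Adj) (hiso : NoIsolated Adj) :
    tkRainbow k Adj = k * totalDomNum Adj ↔
      ∃ f : V → Finset (Fin k), IsTkRDF k Adj f ∧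
        (∑ v, (f v).card) = tkRainbow k Adj ∧
        ∀ v, f v = Finset.univ ∨ f v = ∅ := by
  classical
  have hne : (Finset.univ : Finset (Fin k)) ≠ ∅ := by
    have : Nonempty (Fin k) := ⟨⟨0, hk⟩⟩
    simpa using Finset.univ_nonempty.ne_empty
  -- univ is a total dominating set
  have hunivTDS : IsTDSet Adj (Finset.univ : Finset V) := by
    constructor
    · intro v hv; exact absurd (Finset.mem_univ v) hv
    · intro v _
      obtain ⟨u, hu⟩ := hiso v
      refine ⟨u, Finset.mem_univ u, ?_, hu⟩
      rintro rfl
      exact hirr _ (hu.elim id id)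
  -- a minimum total dominating set
  have hTDne : (totalDomNum Adj) ∈
      {m | ∃ S : Finset V, IsTDSet Adj S ∧ S.card = m} :=
    Nat.sInf_mem ⟨_, Finset.univ, hunivTDS, rfl⟩
  obtain ⟨S, hS, hScard⟩ := hTDne
  -- build a TkRDF from a TDS
  have build : ∀ T : Finset V, IsTDSet Adj T →
      IsTkRDF k Adj (fun v => if v ∈ T then Finset.univ else ∅) ∧
      (∑ v, ((fun v => if v ∈ T then (Finset.univ : Finset (Fin k)) else ∅) v).card)
        = k * T.card := by
    intro T hT
    constructor
    · constructor
      · intro v hv c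
        have hvT : v ∉ T := by
          intro h; simp [h] at hv; exact hne hv
        obtain ⟨u, huT, hAdj⟩ := hT.1 v hvT
        exact ⟨u, hAdj, by simp [huT]⟩
      · intro v hv
        have hvT : v ∈ T := by
          by_contra h; simp [h] at hv
        obtain ⟨u, huT, hune, hAdj⟩ := hT.2 v hvT
        exact ⟨u, hune, by simp [huT, hne], hAdj⟩
    · have : ∀ v, ((if v ∈ T then (Finset.univ : Finset (Fin k)) else ∅)).card
          = if v ∈ T then k else 0 := by
        intro v; split <;> simp
      simp only [this]
      rw [Finset.sum_ite_mem, Finset.univ_inter, Finset.sum_const, smul_eq_mul,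
        mul_comm]
  obtain ⟨hfS, hsumS⟩ := build S hS
  have hle : tkRainbow k Adj ≤ k * totalDomNum Adj := by
    apply Nat.sInf_le
    exact ⟨_, hfS, by rw [hsumS, hScard]⟩
  constructor
  · intro heq
    refine ⟨_, hfS, ?_, fun v => by by_cases h : v ∈ S <;> simp [h]⟩
    rw [hsumS, hScard, heq]
  · rintro ⟨f, hf, hsum, hvals⟩
    refine le_antisymm hle ?_
    set T : Finset V := Finset.univ.filter (fun v => f v ≠ ∅) with hTdef
    have hmemT : ∀ v, v ∈ T ↔ f v ≠ ∅ := by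
      intro v; simp [hTdef]
    have hTtds : IsTDSet Adj T := by
      constructor
      · intro v hv
        have hfv : f v = ∅ := by
          by_contra h; exact hv ((hmemT v).2 h)
        obtain ⟨u, hAdj, hc⟩ := hf.1 v hfv ⟨0, hk⟩
        refine ⟨u, (hmemT u).2 ?_, hAdj⟩
        intro h; rw [h] at hc; exact absurd hc (Finset.notMem_empty _)
      · intro v hv
        obtain ⟨u, hune, hfu, hAdj⟩ := hf.2 v ((hmemT v).1 hv)
        exact ⟨u, (hmemT u).2 hfu, hune, hAdj⟩
    have hsumT : (∑ v, (f v).card) = k * T.card := by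
      have : ∀ v, (f v).card = if v ∈ T then k else 0 := by
        intro v
        rcases hvals v with h | h
        · rw [if_pos ((hmemT v).2 (h ▸ hne))]; simp [h]
        · rw [if_neg (fun hvT => (hmemT v).1 hvT h)]; simp [h]
      simp only [this]
      rw [Finset.sum_ite_mem, Finset.univ_inter, Finset.sum_const, smul_eq_mul,
        mul_comm]
    have hTd : totalDomNum Adj ≤ T.card := Nat.sInf_le ⟨T, hTtds, rfl⟩
    calc k * totalDomNum Adj ≤ k * T.card := Nat.mul_le_mul_left k hTd
      _ = ∑ v, (f v).card := hsumT.symm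
      _ = tkRainbow k Adj := hsum
end

section
/- For every positive integer k and every connected digraph D of order n ≥ max{k, 2}, γ_rk(D) ≤ γ_trk(D) ≤ 2·γ_rk(D) − k + 1, where γ_rk(D) is the k-rainbow domination number. -/
open Finset

theorem krd_le_tkRainbow_le_two_krd
    {V : Type*} [Fintype V] [DecidableEq V] (Adj : V → V → Prop)
    (k : ℕ) (hk : 0 < k) (hn : max k 2 ≤ Fintype.card V)
    (hirr : Irreflexive Adj) (hconn : (underlying Adj).Connected) :
    krdNum k Adj ≤ tkRainbow k Adj ∧
      tkRainbow k Adj ≤ 2 * krdNum k Adj - k + 1 := by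
  classical
  set c0 : Fin k := ⟨0, hk⟩ with hc0
  have hcard2 : 1 < Fintype.card V :=
    lt_of_lt_of_le (lt_of_lt_of_le one_lt_two (le_max_right k 2)) hn
  have hnbr : ∀ v : V, ∃ u, u ≠ v ∧ (Adj u v ∨ Adj v u) := by
    intro v
    obtain ⟨u, hu⟩ := Fintype.exists_ne_of_one_lt_card hcard2 v
    obtain ⟨p⟩ := (hconn v u)
    cases p with
    | nil => exact absurd rfl hu
    | cons h q =>
      exact ⟨_, Ne.symm h.1, Or.symm h.2⟩
  have hkuniv : c0 ∈ (Finset.univ : Finset (Fin k)) := Finset.mem_univ _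
  have hg0 : IsTkRDF k Adj (fun _ => (Finset.univ : Finset (Fin k))) := by
    constructor
    · intro v h c
      exact absurd h (Finset.ne_empty_of_mem hkuniv)
    · intro v _
      obtain ⟨u, hu, ha⟩ := hnbr v
      exact ⟨u, hu, Finset.ne_empty_of_mem hkuniv, ha⟩
  have hTne : {w | ∃ f : V → Finset (Fin k), IsTkRDF k Adj f ∧ ∑ v, (f v).card = w}.Nonempty :=
    ⟨_, _, hg0, rfl⟩
  have hKne : {w | ∃ f : V → Finset (Fin k), IsKRDF k Adj f ∧ ∑ v, (f v).card = w}.Nonempty :=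
    ⟨_, _, hg0.1, rfl⟩
  constructor
  · obtain ⟨g, hg, hwg⟩ := Nat.sInf_mem hTne
    exact Nat.sInf_le ⟨g, hg.1, hwg⟩
  · obtain ⟨f, hf, hwf⟩ := Nat.sInf_mem hKne
    set w := krdNum k Adj with hw
    have hwf' : ∑ v, (f v).card = w := hwf
    clear_value w
    clear hwf
    by_cases hall : ∀ x, f x ≠ ∅
    · have hft : IsTkRDF k Adj f := by
        refine ⟨hf, fun v _ => ?_⟩
        obtain ⟨u, hu, ha⟩ := hnbr v
        exact ⟨u, hu, hall u, ha⟩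
      have h1 : tkRainbow k Adj ≤ w := Nat.sInf_le ⟨f, hft, hwf'⟩
      have h2 : Fintype.card V ≤ w := by
        rw [← hwf']
        calc Fintype.card V = ∑ _v : V, 1 := by simp
          _ ≤ ∑ v, (f v).card := Finset.sum_le_sum fun v _ =>
              Finset.card_pos.2 (Finset.nonempty_iff_ne_empty.2 (hall v))
      have hkw : k ≤ w := le_trans (le_trans (le_max_left k 2) hn) h2
      omega
    · push_neg at hall
      obtain ⟨v, hv⟩ := hall
      have hcov : ∀ c : Fin k, ∃ u, Adj u v ∧ c ∈ f u := hf v hv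
      set A : Finset V := Finset.univ.filter (fun u => Adj u v) with hA
      have hkA : k ≤ ∑ u ∈ A, (f u).card := by
        have hsub : (Finset.univ : Finset (Fin k)) ⊆ A.biUnion f := by
          intro c _
          obtain ⟨u, hu, hc⟩ := hcov c
          exact Finset.mem_biUnion.2 ⟨u, Finset.mem_filter.2 ⟨Finset.mem_univ _, hu⟩, hc⟩
        calc k = (Finset.univ : Finset (Fin k)).card := by simp
          _ ≤ (A.biUnion f).card := Finset.card_le_card hsub
          _ ≤ ∑ u ∈ A, (f u).card := Finset.card_biUnion_le
      set Iso : Finset V := Finset.univ.filter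
        (fun u => f u ≠ ∅ ∧ ¬(Adj u v ∨ Adj v u) ∧ u ≠ v ∧
          ∀ x, x ≠ u → f x ≠ ∅ → ¬(Adj x u ∨ Adj u x)) with hIsoDef
      have hdisj : Disjoint A Iso := by
        rw [Finset.disjoint_left]
        intro a ha haI
        exact (Finset.mem_filter.1 haI).2.2.1 (Or.inl (Finset.mem_filter.1 ha).2)
      have hwk : k + Iso.card ≤ w := by
        rw [← hwf']
        calc k + Iso.card ≤ ∑ u ∈ A, (f u).card + ∑ u ∈ Iso, (f u).card := by
              refine Nat.add_le_add hkA ?_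
              calc Iso.card = ∑ _u ∈ Iso, 1 := by simp
                _ ≤ ∑ u ∈ Iso, (f u).card := Finset.sum_le_sum fun u hu =>
                    Finset.card_pos.2 (Finset.nonempty_iff_ne_empty.2
                      (Finset.mem_filter.1 hu).2.1)
          _ = ∑ u ∈ A ∪ Iso, (f u).card := (Finset.sum_union hdisj).symm
          _ ≤ ∑ u : V, (f u).card := Finset.sum_le_sum_of_subset (Finset.subset_univ _)
      choose nb hnb1 hnb2 using hnbr
      set S : Finset V := insert v (Iso.image nb) with hS
      set g : V → Finset (Fin k) :=
        fun x => f x ∪ (if x ∈ S then {c0} else ∅) with hgdef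
      have hgf : ∀ x, f x ⊆ g x := fun x => Finset.subset_union_left
      have hgne : ∀ x, f x ≠ ∅ → g x ≠ ∅ := by
        intro x hx he
        exact hx (Finset.subset_empty.1 (he ▸ hgf x))
      have hgS : ∀ x ∈ S, g x ≠ ∅ := by
        intro x hx
        refine Finset.ne_empty_of_mem (a := c0) ?_
        exact Finset.mem_union_right _ (by rw [if_pos hx]; exact Finset.mem_singleton_self _)
      have hgT : IsTkRDF k Adj g := by
        constructor
        · intro x hx c
          have hfx : f x = ∅ := Finset.subset_empty.1 (hx ▸ hgf x)
          obtain ⟨u, hu, hc⟩ := hf x hfx c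
          exact ⟨u, hu, hgf u hc⟩
        · intro x hx
          by_cases hxv : x = v
          · subst hxv
            obtain ⟨u, hu, hc⟩ := hcov c0
            refine ⟨u, fun h => hirr x (h ▸ hu), hgne u (Finset.ne_empty_of_mem hc), Or.inl hu⟩
          · by_cases hfx : f x = ∅
            · have hxS : x ∈ S := by
                by_contra h
                apply hx
                rw [hgdef]
                simp only [hfx, if_neg h, Finset.empty_union]
              have hxim : x ∈ Iso.image nb := by
                rcases Finset.mem_insert.1 hxS with h | h
                · exact absurd h hxv
                · exact h
              obtain ⟨u, huI, hux⟩ := Finset.mem_image.1 hxim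
              have huf := (Finset.mem_filter.1 huI).2.1
              refine ⟨u, ?_, hgne u huf, ?_⟩
              · intro h
                exact hnb1 u (hux.trans h.symm)
              · have := hnb2 u
                rw [hux] at this
                exact this.symm
            · by_cases hadj : Adj x v ∨ Adj v x
              · exact ⟨v, Ne.symm hxv, hgS v (Finset.mem_insert_self _ _), hadj.symm⟩
              · by_cases hiso : ∀ y, y ≠ x → f y ≠ ∅ → ¬(Adj y x ∨ Adj x y)
                · have hxI : x ∈ Iso :=
                    Finset.mem_filter.2 ⟨Finset.mem_univ _, hfx, hadj, hxv, hiso⟩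
                  have hnbS : nb x ∈ S :=
                    Finset.mem_insert.2 (Or.inr (Finset.mem_image_of_mem _ hxI))
                  exact ⟨nb x, hnb1 x, hgS _ hnbS, hnb2 x⟩
                · push_neg at hiso
                  obtain ⟨y, hyx, hyf, hya⟩ := hiso
                  exact ⟨y, hyx, hgne y (Finset.nonempty_iff_ne_empty.1 hyf), hya⟩
      have hwgb : ∑ x : V, (g x).card ≤ w + 1 + Iso.card := by
        have step1 : ∑ x : V, (g x).card ≤
            ∑ x : V, ((f x).card + (if x ∈ S then (1:ℕ) else 0)) := by
          refine Finset.sum_le_sum fun x _ => ?_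
          refine le_trans (Finset.card_union_le _ _) ?_
          gcongr
          split <;> simp
        have step2 : ∑ x : V, ((f x).card + (if x ∈ S then (1:ℕ) else 0)) = w + S.card := by
          rw [Finset.sum_add_distrib, hwf']
          congr 1
          rw [Finset.sum_ite_mem, Finset.univ_inter]
          simp
        have step3 : S.card ≤ 1 + Iso.card := by
          refine le_trans (Finset.card_insert_le _ _) ?_
          have := Finset.card_image_le (s := Iso) (f := nb)
          omega
        omega
      have hle : tkRainbow k Adj ≤ ∑ x : V, (g x).card := Nat.sInf_le ⟨g, hgT, rfl⟩
      omega
end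

section
/- Let k be a positive integer and D a digraph of order n with maximum in-degree Δ⁻ ≥ maximum out-degree Δ⁺ ≥ 1. If k > (Δ⁻)², then γ_trk(D) = n. -/
open Finset

theorem tkRainbow_eq_card_of_k_gt_sq_maxInDeg
    {V : Type*} [Fintype V] [DecidableEq V] (Adj : V → V → Prop)
    (k : ℕ) (hirr : Irreflexive Adj) (hiso : NoIsolated Adj)
    (hout : 1 ≤ maxOutDeg Adj) (hdeg : maxOutDeg Adj ≤ maxInDeg Adj)
    (hk : (maxInDeg Adj) ^ 2 < k) :
    tkRainbow k Adj = Fintype.card V := by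
  classical
  set Δ := maxInDeg Adj with hΔdef
  have hΔ1 : 1 ≤ Δ := le_trans hout hdeg
  have hk0 : 0 < k := lt_of_le_of_lt (Nat.zero_le _) hk
  have hin : ∀ v : V, (univ.filter fun u => Adj u v).card ≤ Δ := by
    intro v
    have h1 : Nat.card {u | Adj u v} ≤ Δ :=
      Finset.le_sup (f := fun v => Nat.card {u | Adj u v}) (mem_univ v)
    rwa [Nat.card_eq_fintype_card, Fintype.card_subtype] at h1
  have hout' : ∀ v : V, (univ.filter fun u => Adj v u).card ≤ Δ := by
    intro v
    have h1 : Nat.card {u | Adj v u} ≤ maxOutDeg Adj :=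
      Finset.le_sup (f := fun v => Nat.card {u | Adj v u}) (mem_univ v)
    rw [Nat.card_eq_fintype_card, Fintype.card_subtype] at h1
    exact le_trans h1 hdeg
  -- the all-singleton function is a total k-rainbow dominating function
  have hwit : IsTkRDF k Adj (fun _ => ({⟨0, hk0⟩} : Finset (Fin k))) := by
    constructor
    · intro v hv
      simp at hv
    · intro v _
      obtain ⟨u, hu⟩ := hiso v
      refine ⟨u, ?_, by simp, hu⟩
      rintro rfl
      rcases hu with h | h
      · exact hirr _ h
      · exact hirr _ h
  have hwsum : ∑ _v : V, (({⟨0, hk0⟩} : Finset (Fin k))).card = Fintype.card V := by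
    simp
  have hmem : Fintype.card V ∈
      {w | ∃ f : V → Finset (Fin k), IsTkRDF k Adj f ∧ ∑ v, (f v).card = w} :=
    ⟨fun _ => ({⟨0, hk0⟩} : Finset (Fin k)), hwit, hwsum⟩
  -- lower bound: any k-rainbow dominating function has weight ≥ n
  have hlow : ∀ f : V → Finset (Fin k), IsKRDF k Adj f →
      Fintype.card V ≤ ∑ v, (f v).card := by
    intro f hf
    set V0 := univ.filter (fun v => f v = ∅) with hV0
    set U := univ.filter (fun u => Δ + 1 ≤ (f u).card) with hU
    have hA : ∀ v ∈ V0, ∃ u, Adj u v ∧ Δ + 1 ≤ (f u).card := by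
      intro v hv
      rw [hV0, mem_filter] at hv
      by_contra hcon
      push_neg at hcon
      have hcover : (univ : Finset (Fin k)) ⊆ (univ.filter fun u => Adj u v).biUnion f := by
        intro c _
        obtain ⟨u, hu1, hu2⟩ := hf v hv.2 c
        exact mem_biUnion.2 ⟨u, mem_filter.2 ⟨mem_univ u, hu1⟩, hu2⟩
      have h1 : k ≤ Δ * Δ := by
        calc k = (univ : Finset (Fin k)).card := by simp
          _ ≤ ((univ.filter fun u => Adj u v).biUnion f).card := card_le_card hcover
          _ ≤ ∑ u ∈ univ.filter fun u => Adj u v, (f u).card := card_biUnion_le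
          _ ≤ ∑ _u ∈ univ.filter fun u => Adj u v, Δ := by
                refine sum_le_sum ?_
                intro u hu
                have := hcon u (mem_filter.1 hu).2
                omega
          _ = (univ.filter fun u => Adj u v).card * Δ := by rw [sum_const, smul_eq_mul]
          _ ≤ Δ * Δ := Nat.mul_le_mul_right _ (hin v)
      have h2 := hk
      rw [pow_two] at h2
      omega
    have hA' : ∀ v : V, ∃ u, v ∈ V0 → Adj u v ∧ Δ + 1 ≤ (f u).card := by
      intro v
      by_cases hv : v ∈ V0
      · obtain ⟨u, hu⟩ := hA v hv
        exact ⟨u, fun _ => hu⟩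
      · exact ⟨v, fun h => absurd h hv⟩
    choose g hg using hA'
    have hgU : ∀ v ∈ V0, g v ∈ U := fun v hv =>
      mem_filter.2 ⟨mem_univ _, (hg v hv).2⟩
    have hcount : V0.card ≤ Δ * U.card := by
      rw [card_eq_sum_card_fiberwise hgU]
      calc ∑ u ∈ U, (V0.filter fun v => g v = u).card
          ≤ ∑ _u ∈ U, Δ := by
            refine sum_le_sum fun u hu => ?_
            refine le_trans (card_le_card ?_) (hout' u)
            intro v hv
            rw [mem_filter] at hv
            have hadj := (hg v hv.1).1
            rw [hv.2] at hadj
            exact mem_filter.2 ⟨mem_univ _, hadj⟩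
        _ = Δ * U.card := by rw [sum_const, smul_eq_mul, mul_comm]
    have hUV0 : U ⊆ univ \ V0 := by
      intro u hu
      rw [hU, mem_filter] at hu
      rw [mem_sdiff]
      refine ⟨mem_univ _, ?_⟩
      rw [hV0, mem_filter]
      rintro ⟨-, h⟩
      rw [h] at hu
      simp at hu
    have h0 : ∑ v ∈ V0, (f v).card = 0 := by
      refine sum_eq_zero fun v hv => ?_
      rw [(mem_filter.1 hv).2]
      simp
    have hV0sub : V0 ⊆ univ := filter_subset _ _
    have hsplit1 : ∑ v ∈ univ \ V0, (f v).card + ∑ v ∈ V0, (f v).card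
        = ∑ v, (f v).card := Finset.sum_sdiff hV0sub
    have hsplit2 : ∑ v ∈ (univ \ V0) \ U, (f v).card + ∑ u ∈ U, (f u).card
        = ∑ v ∈ univ \ V0, (f v).card := Finset.sum_sdiff hUV0
    have hUge : (Δ + 1) * U.card ≤ ∑ u ∈ U, (f u).card := by
      calc (Δ + 1) * U.card = ∑ _u ∈ U, (Δ + 1) := by
            rw [sum_const, smul_eq_mul, mul_comm]
        _ ≤ _ := sum_le_sum fun u hu => (mem_filter.1 hu).2
    have hWge : ((univ \ V0) \ U).card ≤ ∑ v ∈ (univ \ V0) \ U, (f v).card := by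
      calc ((univ \ V0) \ U).card = ∑ _v ∈ (univ \ V0) \ U, 1 := by
            rw [sum_const, smul_eq_mul, mul_one]
        _ ≤ _ := by
            refine sum_le_sum fun v hv => ?_
            have hv1 := (mem_sdiff.1 (mem_sdiff.1 hv).1).2
            rw [hV0, mem_filter] at hv1
            push_neg at hv1
            have : f v ≠ ∅ := (hv1 (mem_univ v)).ne_empty
            exact Nat.one_le_iff_ne_zero.2 (fun hc => this (card_eq_zero.1 hc))
    have hc1 : (univ \ V0).card + V0.card = Fintype.card V := by
      rw [Finset.card_sdiff_add_card_eq_card hV0sub, Finset.card_univ]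
    have hc2 : ((univ \ V0) \ U).card + U.card = (univ \ V0).card :=
      Finset.card_sdiff_add_card_eq_card hUV0
    have hmul : (Δ + 1) * U.card = Δ * U.card + U.card := by ring
    omega
  refine le_antisymm (Nat.sInf_le hmem) (le_csInf ⟨_, hmem⟩ ?_)
  rintro w ⟨f, ⟨hf1, -⟩, rfl⟩
  exact hlow f hf1
end

section
/- For every integer k ≥ 2, if D is a directed path or a directed cycle of order n, then γ_trk(D) = n. -/
open Finset

lemma lower_bound {n k : ℕ} (hk : 2 ≤ k) (Adj : Fin n → Fin n → Prop)
    (hin : ∀ u u' v, Adj u v → Adj u' v → u = u')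
    (hout : ∀ u v v', Adj u v → Adj u v' → v = v')
    (f : Fin n → Finset (Fin k)) (hf : IsKRDF k Adj f) :
    n ≤ ∑ v, (f v).card := by
  classical
  set E := univ.filter (fun v : Fin n => f v = ∅) with hE
  set N := univ.filter (fun v : Fin n => ¬ (f v = ∅)) with hN
  have key : ∀ v : Fin n, ∃ u, f v = ∅ → Adj u v ∧ 2 ≤ (f u).card := by
    intro v
    by_cases hv : f v = ∅
    · obtain ⟨u0, hu0, hc0⟩ := hf v hv ⟨0, by omega⟩
      obtain ⟨u1, hu1, hc1⟩ := hf v hv ⟨1, by omega⟩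
      have huu : u0 = u1 := hin _ _ _ hu0 hu1
      subst huu
      refine ⟨u0, fun _ => ⟨hu0, Finset.one_lt_card.mpr ⟨_, hc0, _, hc1, ?_⟩⟩⟩
      intro h
      have := congrArg Fin.val h
      simp at this
    · exact ⟨v, fun h => absurd h hv⟩
  choose g hg using key
  have hgN : ∀ v ∈ E, g v ∈ N := by
    intro v hv
    simp only [hE, mem_filter, mem_univ, true_and] at hv
    have h2 := (hg v hv).2
    simp only [hN, mem_filter, mem_univ, true_and]
    intro h; rw [h] at h2; simp at h2
  have hinj : Set.InjOn g E := by
    intro a ha b hb hab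
    simp only [hE, coe_filter, Set.mem_setOf_eq, mem_univ, true_and] at ha hb
    have h1 := (hg a ha).1
    have h2 := (hg b hb).1
    rw [hab] at h1
    exact hout _ _ _ h1 h2
  have himg : E.image g ⊆ N := by
    intro x hx
    rcases Finset.mem_image.mp hx with ⟨w, hw, rfl⟩
    exact hgN w hw
  have hcardimg : (E.image g).card = E.card := Finset.card_image_of_injOn hinj
  have hsum : ∑ v, (f v).card = ∑ v ∈ N, (f v).card := by
    refine (Finset.sum_subset (subset_univ N) ?_).symm
    intro x _ hx
    simp only [hN, mem_filter, mem_univ, true_and, not_not] at hx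
    simp [hx]
  have split : ∑ v ∈ N \ E.image g, (f v).card + ∑ v ∈ E.image g, (f v).card
      = ∑ v ∈ N, (f v).card := Finset.sum_sdiff himg
  have hb1 : (N \ E.image g).card ≤ ∑ v ∈ N \ E.image g, (f v).card := by
    calc (N \ E.image g).card = ∑ _v ∈ N \ E.image g, 1 := by simp
    _ ≤ ∑ v ∈ N \ E.image g, (f v).card := by
        refine Finset.sum_le_sum ?_
        intro x hx
        rcases Finset.mem_sdiff.mp hx with ⟨hxN, _⟩
        simp only [hN, mem_filter, mem_univ, true_and] at hxN
        exact Finset.card_pos.mpr (Finset.nonempty_iff_ne_empty.mpr hxN)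
  have hb2 : 2 * E.card ≤ ∑ v ∈ E.image g, (f v).card := by
    calc 2 * E.card = ∑ _v ∈ E.image g, 2 := by simp [hcardimg, mul_comm]
    _ ≤ ∑ v ∈ E.image g, (f v).card := by
        refine Finset.sum_le_sum ?_
        intro x hx
        rcases Finset.mem_image.mp hx with ⟨w, hw, rfl⟩
        simp only [hE, mem_filter, mem_univ, true_and] at hw
        exact (hg w hw).2
  have htotal : E.card + N.card = n := by
    have := Finset.card_filter_add_card_filter_not
      (s := (univ : Finset (Fin n))) (p := fun v => f v = ∅)
    simpa [hE, hN] using this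
  have hle : E.card ≤ N.card := hcardimg ▸ Finset.card_le_card himg
  have hsd : (N \ E.image g).card = N.card - E.card := by
    rw [Finset.card_sdiff_of_subset himg, hcardimg]
  omega

lemma upper_bound {n k : ℕ} (hk : 2 ≤ k) (Adj : Fin n → Fin n → Prop)
    (hnb : ∀ v : Fin n, ∃ u, u ≠ v ∧ (Adj u v ∨ Adj v u)) :
    (n : ℕ) ∈ {w | ∃ f : Fin n → Finset (Fin k), IsTkRDF k Adj f ∧ ∑ v, (f v).card = w} := by
  refine ⟨fun _ => {⟨0, by omega⟩}, ⟨?_, ?_⟩, by simp⟩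
  · intro v hv
    simp at hv
  · intro v _
    obtain ⟨u, hu, hadj⟩ := hnb v
    exact ⟨u, hu, by simp, hadj⟩

theorem tkRainbow_path_cycle (k n : ℕ) (hk : 2 ≤ k) (hn : 2 ≤ n) :
    tkRainbow k (fun i j : Fin n => (i : ℕ) + 1 = (j : ℕ)) = n ∧
    tkRainbow k (fun i j : Fin n => ((i : ℕ) + 1) % n = (j : ℕ)) = n := by
  have mod_inj : ∀ a b : ℕ, a < n → b < n → (a + 1) % n = (b + 1) % n → a = b := by
    intro a b ha hb h
    rcases eq_or_lt_of_le (Nat.succ_le_of_lt ha) with h1 | h1 <;>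
      rcases eq_or_lt_of_le (Nat.succ_le_of_lt hb) with h2 | h2
    · omega
    · rw [Nat.mod_eq_of_lt h2, show a + 1 = n from h1, Nat.mod_self] at h; omega
    · rw [Nat.mod_eq_of_lt h1, show b + 1 = n from h2, Nat.mod_self] at h; omega
    · rw [Nat.mod_eq_of_lt h1, Nat.mod_eq_of_lt h2] at h; omega
  constructor
  · -- directed path
    have hnb : ∀ v : Fin n, ∃ u : Fin n, u ≠ v ∧
        ((u : ℕ) + 1 = (v : ℕ) ∨ (v : ℕ) + 1 = (u : ℕ)) := by
      intro v
      by_cases hv : (v : ℕ) + 1 < n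
      · exact ⟨⟨(v : ℕ) + 1, hv⟩, by simp [Fin.ext_iff], Or.inr rfl⟩
      · have hv' : (v : ℕ) = n - 1 := by have := v.isLt; omega
        refine ⟨⟨n - 2, by omega⟩, ?_, Or.inl ?_⟩
        · simp only [Fin.ext_iff, ne_eq]; omega
        · show (n - 2) + 1 = (v : ℕ); omega
    have hmem := upper_bound (n := n) hk (fun i j : Fin n => (i : ℕ) + 1 = (j : ℕ)) hnb
    refine le_antisymm (Nat.sInf_le hmem) ?_
    have hne : {w | ∃ f : Fin n → Finset (Fin k),
        IsTkRDF k (fun i j : Fin n => (i : ℕ) + 1 = (j : ℕ)) f ∧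
        ∑ v, (f v).card = w}.Nonempty := ⟨n, hmem⟩
    obtain ⟨f, hf, hw⟩ := Nat.sInf_mem hne
    rw [tkRainbow, ← hw]
    refine lower_bound hk (fun i j : Fin n => (i : ℕ) + 1 = (j : ℕ)) ?_ ?_ f hf.1
    · intro u u' v hu hu'
      clear hw hne hmem hnb hf
      exact Fin.ext (by omega)
    · intro u v v' hv hv'
      clear hw hne hmem hnb hf
      exact Fin.ext (by omega)
  · -- directed cycle
    have hnb : ∀ v : Fin n, ∃ u : Fin n, u ≠ v ∧
        (((u : ℕ) + 1) % n = (v : ℕ) ∨ ((v : ℕ) + 1) % n = (u : ℕ)) := by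
      intro v
      refine ⟨⟨((v : ℕ) + 1) % n, Nat.mod_lt _ (by omega)⟩, ?_, Or.inr rfl⟩
      simp only [Fin.ext_iff, ne_eq]
      intro h
      by_cases hv : (v : ℕ) + 1 < n
      · rw [Nat.mod_eq_of_lt hv] at h; omega
      · have hv' : (v : ℕ) + 1 = n := by have := v.isLt; omega
        rw [hv', Nat.mod_self] at h; omega
    have hmem := upper_bound (n := n) hk
      (fun i j : Fin n => ((i : ℕ) + 1) % n = (j : ℕ)) hnb
    refine le_antisymm (Nat.sInf_le hmem) ?_
    have hne : {w | ∃ f : Fin n → Finset (Fin k),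
        IsTkRDF k (fun i j : Fin n => ((i : ℕ) + 1) % n = (j : ℕ)) f ∧
        ∑ v, (f v).card = w}.Nonempty := ⟨n, hmem⟩
    obtain ⟨f, hf, hw⟩ := Nat.sInf_mem hne
    rw [tkRainbow, ← hw]
    refine lower_bound hk (fun i j : Fin n => ((i : ℕ) + 1) % n = (j : ℕ)) ?_ ?_ f hf.1
    · intro u u' v hu hu'
      clear hw hne hmem hnb hf
      exact Fin.ext (mod_inj _ _ u.isLt u'.isLt (by rw [hu, hu']))
    · intro u v v' hv hv'
      clear hw hne hmem hnb hf
      exact Fin.ext (by rw [← hv, ← hv'])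
end

section
/- Let k ≥ 2 be an integer and D a digraph of order n with no isolated vertex. Then γ_trk(D) = k if and only if either (a) n = k, or (b) n ≥ k+1 and there exists a set X = {v₁,…,v_t} ⊆ V(D) with 2 ≤ t ≤ k such that the induced subdigraph D[X] has no isolated vertex and every vertex of V(D) \ X is an out-neighbor of every v_i (1 ≤ i ≤ t). -/
open Finset

lemma my_lower_bound {V : Type*} [Fintype V] (Adj : V → V → Prop) (k : ℕ)
    (f : V → Finset (Fin k)) (hf : IsKRDF k Adj f) :
    min (Fintype.card V) k ≤ ∑ v, (f v).card := by
  by_cases h : ∀ v, f v ≠ ∅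
  · refine le_trans (min_le_left _ _) ?_
    rw [← Finset.card_univ, Finset.card_eq_sum_ones]
    exact Finset.sum_le_sum fun v _ =>
      Nat.one_le_iff_ne_zero.mpr (by simpa [Finset.card_eq_zero] using h v)
  · push_neg at h
    obtain ⟨v, hv⟩ := h
    refine le_trans (min_le_right _ _) ?_
    have hsub : (Finset.univ : Finset (Fin k)) ⊆ Finset.univ.biUnion f := by
      intro c _
      obtain ⟨u, _, hu⟩ := hf v hv c
      exact Finset.mem_biUnion.mpr ⟨u, Finset.mem_univ u, hu⟩
    calc k = (Finset.univ : Finset (Fin k)).card := by simp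
      _ ≤ (Finset.univ.biUnion f).card := Finset.card_le_card hsub
      _ ≤ ∑ v, (f v).card := Finset.card_biUnion_le

lemma my_upper_mem {V : Type*} [Fintype V] (Adj : V → V → Prop) (k : ℕ) (hk : 1 ≤ k)
    (hirr : Irreflexive Adj) (hiso : NoIsolated Adj) :
    ∃ f : V → Finset (Fin k), IsTkRDF k Adj f ∧ ∑ v, (f v).card = Fintype.card V := by
  refine ⟨fun _ => {⟨0, hk⟩}, ⟨?_, ?_⟩, by simp⟩
  · intro v hv; simp at hv
  · intro v _
    obtain ⟨u, hu⟩ := hiso v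
    refine ⟨u, ?_, by simp, hu⟩
    rintro rfl
    rcases hu with h | h <;> exact hirr _ h


lemma my_extract {V : Type*} [Fintype V] [DecidableEq V] (Adj : V → V → Prop) (k : ℕ)
    (hk : 2 ≤ k) (hn : k < Fintype.card V)
    (f : V → Finset (Fin k)) (hf : IsTkRDF k Adj f) (hw : ∑ v, (f v).card = k) :
    ∃ X : Finset V, 2 ≤ X.card ∧ X.card ≤ k ∧
      (∀ v ∈ X, ∃ u ∈ X, u ≠ v ∧ (Adj u v ∨ Adj v u)) ∧
      ∀ v, v ∉ X → ∀ u ∈ X, Adj u v := by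
  classical
  set X : Finset V := Finset.univ.filter (fun v => f v ≠ ∅) with hX
  have hmemX : ∀ v, v ∈ X ↔ f v ≠ ∅ := by intro v; simp [hX]
  have hsumX : ∑ v ∈ X, (f v).card = k := by
    have : ∑ v ∈ X, (f v).card = ∑ v, (f v).card := by
      apply Finset.sum_subset (Finset.subset_univ X)
      intro x _ hx
      have : f x = ∅ := by by_contra hne; exact hx ((hmemX x).mpr hne)
      simp [this]
    rw [this]; exact hw
  have hXk : X.card ≤ k := by
    calc X.card = ∑ _v ∈ X, 1 := by simp
    _ ≤ ∑ v ∈ X, (f v).card := Finset.sum_le_sum fun v hv =>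
        Nat.one_le_iff_ne_zero.mpr (by
          simpa [Finset.card_eq_zero] using (hmemX v).mp hv)
    _ = k := hsumX
  -- a vertex outside X
  obtain ⟨v₀, hv₀⟩ : ∃ v₀, v₀ ∉ X := by
    by_contra hall
    push_neg at hall
    have : X = Finset.univ := Finset.eq_univ_iff_forall.mpr hall
    rw [this, Finset.card_univ] at hXk
    omega
  have hfv₀ : f v₀ = ∅ := by
    by_contra hne; exact hv₀ ((hmemX v₀).mpr hne)
  -- fibers
  set A : Fin k → Finset V := fun c => X.filter (fun u => c ∈ f u) with hA
  have hA1 : ∀ c, 1 ≤ (A c).card := by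
    intro c
    obtain ⟨u, _, hu⟩ := hf.1 v₀ hfv₀ c
    have huX : u ∈ X := (hmemX u).mpr (fun he => by simp [he] at hu)
    exact Finset.card_pos.mpr ⟨u, Finset.mem_filter.mpr ⟨huX, hu⟩⟩
  have hAsum : ∑ c : Fin k, (A c).card = k := by
    have h1 : ∀ v ∈ X, (f v).card = ∑ c : Fin k, if c ∈ f v then 1 else 0 := by
      intro v _
      rw [Finset.sum_ite_mem, Finset.univ_inter, Finset.card_eq_sum_ones]
    have : ∑ c : Fin k, (A c).card = ∑ v ∈ X, (f v).card := by
      rw [Finset.sum_congr rfl h1, Finset.sum_comm]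
      exact Finset.sum_congr rfl fun c _ => by rw [hA]; exact Finset.card_filter _ _
    rw [this]; exact hsumX
  have hAone : ∀ c, (A c).card = 1 := by
    intro c
    by_contra hc
    have h2 : 2 ≤ (A c).card := by have := hA1 c; omega
    have hsplit : (A c).card + ∑ c' ∈ Finset.univ.erase c, (A c').card = k :=
      (Finset.add_sum_erase Finset.univ (fun c => (A c).card) (Finset.mem_univ c)).trans hAsum
    have hrest : (Finset.univ.erase c).card ≤ ∑ c' ∈ Finset.univ.erase c, (A c').card :=
      Finset.card_nsmul_le_sum _ _ 1 (fun c' _ => hA1 c') |>.trans_eq' (by simp)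
    have hcard : (Finset.univ.erase c).card = k - 1 := by
      rw [Finset.card_erase_of_mem (Finset.mem_univ c)]; simp
    omega
  refine ⟨X, ?_, hXk, ?_, ?_⟩
  · -- 2 ≤ X.card
    have hXne : X.Nonempty := by
      rcases Finset.eq_empty_or_nonempty X with h | h
      · rw [h] at hsumX; simp at hsumX; omega
      · exact h
    obtain ⟨v, hv⟩ := hXne
    obtain ⟨u, hune, hu, _⟩ := hf.2 v ((hmemX v).mp hv)
    exact Finset.one_lt_card.mpr ⟨u, (hmemX u).mpr hu, v, hv, hune⟩
  · intro v hv
    obtain ⟨u, hune, hu, hadj⟩ := hf.2 v ((hmemX v).mp hv)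
    exact ⟨u, (hmemX u).mpr hu, hune, hadj⟩
  · intro v hv u hu
    have hfv : f v = ∅ := by by_contra hne; exact hv ((hmemX v).mpr hne)
    obtain ⟨c, hc⟩ := Finset.nonempty_iff_ne_empty.mpr ((hmemX u).mp hu)
    obtain ⟨w, hwadj, hwc⟩ := hf.1 v hfv c
    have hwX : w ∈ X := (hmemX w).mpr (fun he => by simp [he] at hwc)
    have : w = u := Finset.card_le_one.mp (le_of_eq (hAone c))
      w (Finset.mem_filter.mpr ⟨hwX, hwc⟩) u (Finset.mem_filter.mpr ⟨hu, hc⟩)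
    rwa [this] at hwadj


lemma my_construct {V : Type*} [Fintype V] [DecidableEq V] (Adj : V → V → Prop) (k : ℕ)
    (X : Finset V) (ht2 : 2 ≤ X.card) (htk : X.card ≤ k)
    (hni : ∀ v ∈ X, ∃ u ∈ X, u ≠ v ∧ (Adj u v ∨ Adj v u))
    (hdom : ∀ v, v ∉ X → ∀ u ∈ X, Adj u v) :
    ∃ f : V → Finset (Fin k), IsTkRDF k Adj f ∧ ∑ v, (f v).card = k := by
  classical
  set t := X.card with htdef
  have ht0 : 0 < t := by omega
  let e : {x // x ∈ X} ≃ Fin t := X.equivFin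
  let g : Fin k → Fin t := fun c => ⟨min (c : ℕ) (t - 1), by omega⟩
  let f : V → Finset (Fin k) := fun v =>
    if h : v ∈ X then Finset.univ.filter (fun c => g c = e ⟨v, h⟩) else ∅
  have hne : ∀ v (h : v ∈ X), (f v).Nonempty := by
    intro v h
    refine ⟨⟨(e ⟨v, h⟩ : ℕ), lt_of_lt_of_le (e ⟨v, h⟩).isLt htk⟩, ?_⟩
    simp only [f, dif_pos h, Finset.mem_filter, Finset.mem_univ, true_and]
    apply Fin.ext
    simp only [g]
    have := (e ⟨v, h⟩).isLt
    omega
  have hfmem : ∀ v, f v ≠ ∅ ↔ v ∈ X := by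
    intro v
    constructor
    · intro h
      by_contra hv
      exact h (by simp [f, dif_neg hv])
    · intro h
      exact Finset.nonempty_iff_ne_empty.mp (hne v h)
  refine ⟨f, ⟨?_, ?_⟩, ?_⟩
  · intro v hv c
    have hvX : v ∉ X := fun h => (hfmem v).mpr h hv
    refine ⟨(e.symm (g c) : V), hdom v hvX _ (e.symm (g c)).2, ?_⟩
    have hm : ((e.symm (g c) : V)) ∈ X := (e.symm (g c)).2
    simp only [f, dif_pos hm, Finset.mem_filter, Finset.mem_univ, true_and]
    have : (⟨(e.symm (g c) : V), hm⟩ : {x // x ∈ X}) = e.symm (g c) := Subtype.ext rfl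
    rw [this, e.apply_symm_apply]
  · intro v hv
    obtain ⟨u, hu, hune, hadj⟩ := hni v ((hfmem v).mp hv)
    exact ⟨u, hune, (hfmem u).mpr hu, hadj⟩
  · have hsum1 : ∑ v, (f v).card = ∑ v ∈ X, (f v).card := by
      symm
      apply Finset.sum_subset (Finset.subset_univ X)
      intro x _ hx
      have : f x = ∅ := by simp [f, dif_neg hx]
      simp [this]
    have hsum2 : ∑ v ∈ X, (f v).card
        = ∑ x ∈ X.attach, (Finset.univ.filter (fun c => g c = e x)).card := by
      rw [← Finset.sum_attach X (fun v => (f v).card)]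
      apply Finset.sum_congr rfl
      intro x _
      simp only [f, dif_pos x.2]
    have hsum3 : ∑ x ∈ X.attach, (Finset.univ.filter (fun c => g c = e x)).card
        = ∑ i : Fin t, (Finset.univ.filter (fun c => g c = i)).card := by
      rw [← Finset.univ_eq_attach]
      exact Fintype.sum_equiv e _ _ (fun x => rfl)
    have hsum4 : ∑ i : Fin t, (Finset.univ.filter (fun c => g c = i)).card = k := by
      rw [← Finset.card_eq_sum_card_fiberwise (fun c _ => Finset.mem_univ (g c))]
      simp
    rw [hsum1, hsum2, hsum3, hsum4]

theorem tkRainbow_eq_k_iff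
    {V : Type*} [Fintype V] [DecidableEq V] (Adj : V → V → Prop)
    (k : ℕ) (hk : 2 ≤ k) (hirr : Irreflexive Adj) (hiso : NoIsolated Adj) :
    tkRainbow k Adj = k ↔
      (Fintype.card V = k ∨
        (k + 1 ≤ Fintype.card V ∧
          ∃ X : Finset V, 2 ≤ X.card ∧ X.card ≤ k ∧
            (∀ v ∈ X, ∃ u ∈ X, u ≠ v ∧ (Adj u v ∨ Adj v u)) ∧
            ∀ v, v ∉ X → ∀ u ∈ X, Adj u v)) := by
  classical
  set S := {w | ∃ f : V → Finset (Fin k), IsTkRDF k Adj f ∧ ∑ v, (f v).card = w} with hS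
  have hSne : S.Nonempty := by
    obtain ⟨f, hf, hw⟩ := my_upper_mem Adj k (by omega) hirr hiso
    exact ⟨Fintype.card V, f, hf, hw⟩
  have hub : tkRainbow k Adj ≤ Fintype.card V := by
    obtain ⟨f, hf, hw⟩ := my_upper_mem Adj k (by omega) hirr hiso
    exact Nat.sInf_le ⟨f, hf, hw⟩
  have hlb : ∀ w ∈ S, min (Fintype.card V) k ≤ w := by
    rintro w ⟨f, hf, hw⟩
    rw [← hw]
    exact my_lower_bound Adj k f hf.1
  constructor
  · intro h
    have hkn : k ≤ Fintype.card V := h ▸ hub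
    rcases eq_or_lt_of_le hkn with heq | hlt
    · exact Or.inl heq.symm
    · right
      refine ⟨hlt, ?_⟩
      obtain ⟨f, hf, hw⟩ := Nat.sInf_mem hSne
      have hts : tkRainbow k Adj = sInf S := rfl
      rw [← hts, h] at hw
      exact my_extract Adj k hk hlt f hf hw
  · rintro (h | ⟨hn, X, h2, hkk, hni, hdom⟩)
    · apply le_antisymm
      · exact hub.trans (le_of_eq h)
      · apply le_csInf hSne
        intro w hw
        have := hlb w hw
        rw [h, min_self] at this
        exact this
    · apply le_antisymm
      · obtain ⟨f, hf, hw⟩ := my_construct Adj k X h2 hkk hni hdom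
        exact Nat.sInf_le ⟨f, hf, hw⟩
      · apply le_csInf hSne
        intro w hw
        have := hlb w hw
        rwa [min_eq_right (by omega)] at this
end

section
/- For every digraph D with no isolated vertex and positive integers k' > k, γ_trk'(D) ≤ γ_trk(D) + (k' − k)·⌊γ_trk(D)/k⌋. -/
open Finset

theorem tkRainbow_mono_bound
    {V : Type*} [Fintype V] [DecidableEq V] (Adj : V → V → Prop)
    (k k' : ℕ) (hk : 0 < k) (hkk : k < k')
    (hirr : Irreflexive Adj) (hiso : NoIsolated Adj) :
    tkRainbow k' Adj ≤ tkRainbow k Adj + (k' - k) * (tkRainbow k Adj / k) := by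

  classical
  -- the set of total k-RDFs is nonempty
  have hne : {w | ∃ f : V → Finset (Fin k), IsTkRDF k Adj f ∧ ∑ v, (f v).card = w}.Nonempty := by
    refine ⟨_, fun _ => Finset.univ, ⟨?_, ?_⟩, rfl⟩
    · intro v hv
      exact absurd hv (by simp [← Finset.card_eq_zero, hk.ne'])
    · intro v _
      obtain ⟨u, hu⟩ := hiso v
      refine ⟨u, fun huv => ?_, by simp [← Finset.card_eq_zero, hk.ne'], hu⟩
      cases huv
      exact hu.elim (hirr _) (hirr _)
  obtain ⟨f, hf, hw⟩ : tkRainbow k Adj ∈ _ := Nat.sInf_mem hne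
  set w := tkRainbow k Adj with hwdef
  -- counting: some color occurs at most w / k times
  have hcount : ∑ i : Fin k, (Finset.univ.filter (fun v => i ∈ f v)).card = w := by
    rw [← hw]
    simp_rw [Finset.card_filter]
    rw [Finset.sum_comm]
    simp_rw [← Finset.card_filter, Finset.filter_univ_mem]
  obtain ⟨i, hi⟩ : ∃ i : Fin k, (Finset.univ.filter (fun v => i ∈ f v)).card ≤ w / k := by
    by_contra h
    push_neg at h
    have : ∑ i : Fin k, (w / k + 1) ≤ ∑ i : Fin k, (Finset.univ.filter (fun v => i ∈ f v)).card :=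
      Finset.sum_le_sum fun i _ => h i
    rw [hcount, Finset.sum_const, Finset.card_univ, Fintype.card_fin, smul_eq_mul,
      mul_comm] at this
    exact Nat.not_succ_le_self _ ((Nat.le_div_iff_mul_le hk).mpr this)
  -- the new function
  set extra : Finset (Fin k') := Finset.univ.filter (fun c => k ≤ c.val) with hextra
  have hextracard : extra.card ≤ k' - k := by
    have := Finset.card_le_card_of_injOn (f := fun c : Fin k' => c.val)
      (s := extra) (t := Finset.Ico k k')
      (by intro c hc; have hc := Finset.mem_filter.mp (show c ∈ extra from hc)
          exact Finset.mem_Ico.mpr ⟨hc.2, c.isLt⟩)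
      (fun a _ b _ h => Fin.val_injective h)
    simpa using this
  set g : V → Finset (Fin k') := fun v =>
    (f v).image (Fin.castLE hkk.le) ∪ (if i ∈ f v then extra else ∅) with hg
  have hsupp : ∀ v, f v = ∅ → g v = ∅ := by
    intro v hv; simp [hg, hv]
  have hsupp' : ∀ v, f v ≠ ∅ → g v ≠ ∅ := by
    intro v hv
    obtain ⟨x, hx⟩ := Finset.nonempty_iff_ne_empty.mpr hv
    refine fun h => (Finset.eq_empty_iff_forall_notMem.mp h (Fin.castLE hkk.le x)) ?_
    exact Finset.mem_union_left _ (Finset.mem_image_of_mem _ hx)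
  have hgT : IsTkRDF k' Adj g := by
    constructor
    · intro v hv c
      have hfv : f v = ∅ := by
        by_contra h; exact hsupp' v h hv
      by_cases hc : c.val < k
      · obtain ⟨u, hadj, hcu⟩ := hf.1 v hfv ⟨c.val, hc⟩
        refine ⟨u, hadj, Finset.mem_union_left _ ?_⟩
        exact Finset.mem_image.mpr ⟨⟨c.val, hc⟩, hcu, by ext; rfl⟩
      · obtain ⟨u, hadj, hiu⟩ := hf.1 v hfv i
        refine ⟨u, hadj, Finset.mem_union_right _ ?_⟩
        rw [if_pos hiu]
        simp [hextra, Nat.le_of_not_lt hc]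
    · intro v hv
      have hfv : f v ≠ ∅ := fun h => hv (hsupp v h)
      obtain ⟨u, hu1, hu2, hu3⟩ := hf.2 v hfv
      exact ⟨u, hu1, hsupp' u hu2, hu3⟩
  -- the weight bound
  have hweight : ∑ v, (g v).card ≤ w + (k' - k) * (w / k) := by
    have h1 : ∀ v, (g v).card ≤ (f v).card + (if i ∈ f v then k' - k else 0) := by
      intro v
      refine (Finset.card_union_le _ _).trans (Nat.add_le_add ?_ ?_)
      · exact Finset.card_image_le
      · split <;> simp [hextracard]
    calc ∑ v, (g v).card ≤ ∑ v, ((f v).card + (if i ∈ f v then k' - k else 0)) :=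
          Finset.sum_le_sum fun v _ => h1 v
      _ = w + (Finset.univ.filter (fun v => i ∈ f v)).card * (k' - k) := by
          rw [Finset.sum_add_distrib, hw, Finset.sum_ite, Finset.sum_const_zero,
            Finset.sum_const, smul_eq_mul, add_zero]
      _ ≤ w + (k' - k) * (w / k) := by
          rw [mul_comm]
          exact Nat.add_le_add_left (Nat.mul_le_mul_left _ hi) _
  have hle : tkRainbow k' Adj ≤ ∑ v, (g v).card := Nat.sInf_le ⟨g, hgT, rfl⟩
  exact hle.trans hweight
end

section
/- For every integer n ≥ 2, the total 2-rainbow domination number of the Cartesian product P₂ □ P_n of directed paths satisfies γ_tr2(P₂ □ P_n) = ⌈3n/2⌉. -/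
open Finset

/-! ### Auxiliary machinery for the lower bound -/

/-- Potential function for the transfer-matrix lower bound argument. -/
def Phi (a b : Finset (Fin 2)) (pa pb : Bool) : ℕ :=
  if pa || pb then 0 else
    (if a = Finset.univ then 1 else 0) + (if b ≠ ∅ then 1 else 0) +
      (if a = Finset.univ ∧ b = Finset.univ then 1 else 0)

set_option synthInstance.maxHeartbeats 1000000 in
set_option synthInstance.maxSize 2000 in
set_option maxHeartbeats 4000000 in
lemma trans_key : ∀ (a b a2 b2 : Finset (Fin 2)) (pa pb : Bool),
    (pa = true → a ≠ ∅ ∧ b = ∅) → (pb = true → b ≠ ∅ ∧ a = ∅) →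
    (a2 = ∅ → a = Finset.univ) → (b2 = ∅ → b ∪ a2 = Finset.univ) →
    (pa = true → a2 ≠ ∅) → (pb = true → b2 ≠ ∅) →
    3 + Phi a2 b2 (decide (a2 ≠ ∅ ∧ b2 = ∅ ∧ a = ∅)) (decide (b2 ≠ ∅ ∧ a2 = ∅ ∧ b = ∅)) ≤
      Phi a b pa pb + 2 * (a2.card + b2.card) := by
  decide

set_option synthInstance.maxHeartbeats 1000000 in
set_option synthInstance.maxSize 2000 in
set_option maxHeartbeats 4000000 in
lemma start_key : ∀ (a b : Finset (Fin 2)), a ≠ ∅ → (b = ∅ → a = Finset.univ) →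
    3 + Phi a b (decide (a ≠ ∅ ∧ b = ∅)) (decide (b ≠ ∅ ∧ a = ∅)) ≤ 2 * (a.card + b.card) := by
  decide

lemma adj_iff {n : ℕ} (u v : Fin 2 × Fin n) :
    pathProdAdj 2 n u v ↔
      ((u.1 : ℕ) = (v.1 : ℕ) ∧ (u.2 : ℕ) + 1 = (v.2 : ℕ)) ∨
      ((u.2 : ℕ) = (v.2 : ℕ) ∧ (u.1 : ℕ) + 1 = (v.1 : ℕ)) := by
  simp [pathProdAdj, Fin.ext_iff]

/-- Row 0 of a function on the grid, as a function on `ℕ`. -/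
def colA (n : ℕ) (f : Fin 2 × Fin n → Finset (Fin 2)) (j : ℕ) : Finset (Fin 2) :=
  if h : j < n then f (0, ⟨j, h⟩) else ∅

/-- Row 1 of a function on the grid, as a function on `ℕ`. -/
def colB (n : ℕ) (f : Fin 2 × Fin n → Finset (Fin 2)) (j : ℕ) : Finset (Fin 2) :=
  if h : j < n then f (1, ⟨j, h⟩) else ∅

lemma colA_eq (n : ℕ) (f : Fin 2 × Fin n → Finset (Fin 2)) (j : ℕ) (h : j < n) :
    colA n f j = f (0, ⟨j, h⟩) := dif_pos h

lemma colB_eq (n : ℕ) (f : Fin 2 × Fin n → Finset (Fin 2)) (j : ℕ) (h : j < n) :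
    colB n f j = f (1, ⟨j, h⟩) := dif_pos h

def pendA (n : ℕ) (f : Fin 2 × Fin n → Finset (Fin 2)) (j : ℕ) : Bool :=
  decide (colA n f j ≠ ∅ ∧ colB n f j = ∅ ∧ (j = 0 ∨ colA n f (j - 1) = ∅))

def pendB (n : ℕ) (f : Fin 2 × Fin n → Finset (Fin 2)) (j : ℕ) : Bool :=
  decide (colB n f j ≠ ∅ ∧ colA n f j = ∅ ∧ (j = 0 ∨ colB n f (j - 1) = ∅))

lemma lower_bound_s12 (n : ℕ) (hn : 1 ≤ n) (f : Fin 2 × Fin n → Finset (Fin 2))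
    (hf : IsTkRDF 2 (pathProdAdj 2 n) f) :
    3 * n ≤ 2 * ∑ v, (f v).card := by
  -- conversions between `f` and rows
  have hfA : ∀ u : Fin 2 × Fin n, (u.1 : ℕ) = 0 → f u = colA n f (u.2 : ℕ) := by
    intro u h1
    rw [colA_eq n f _ u.2.isLt]
    congr 1
    exact Prod.ext (Fin.ext (by simpa using h1)) rfl
  have hfB : ∀ u : Fin 2 × Fin n, (u.1 : ℕ) = 1 → f u = colB n f (u.2 : ℕ) := by
    intro u h1
    rw [colB_eq n f _ u.2.isLt]
    congr 1
    exact Prod.ext (Fin.ext (by simpa using h1)) rfl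
  -- rainbow facts
  have hA0 : ∀ j, j < n → colA n f j = ∅ → j ≠ 0 ∧ colA n f (j - 1) = Finset.univ := by
    intro j hj hAj
    have hv := hf.1 (0, ⟨j, hj⟩) (by rw [← colA_eq n f j hj]; exact hAj)
    have hne : j ≠ 0 := by
      intro h0
      obtain ⟨u, hadj, -⟩ := hv 0
      rw [adj_iff] at hadj
      simp only at hadj
      omega
    refine ⟨hne, ?_⟩
    rw [Finset.eq_univ_iff_forall]
    intro c
    obtain ⟨u, hadj, hc⟩ := hv c
    rw [adj_iff] at hadj
    simp only at hadj
    have hu1 : (u.1 : ℕ) = 0 := by omega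
    have hu2 : (u.2 : ℕ) = j - 1 := by omega
    rwa [hfA u hu1, hu2] at hc
  have hB0 : ∀ j, j < n → colB n f j = ∅ →
      colB n f (j - 1) ∪ colA n f j = Finset.univ := by
    intro j hj hBj
    have hv := hf.1 (1, ⟨j, hj⟩) (by rw [← colB_eq n f j hj]; exact hBj)
    rw [Finset.eq_univ_iff_forall]
    intro c
    obtain ⟨u, hadj, hc⟩ := hv c
    rw [adj_iff] at hadj
    simp only at hadj
    rw [Finset.mem_union]
    rcases hadj with ⟨h1, h2⟩ | ⟨h1, h2⟩
    · left
      have hu2 : (u.2 : ℕ) = j - 1 := by omega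
      rwa [hfB u (by omega), hu2] at hc
    · right
      have hu2 : (u.2 : ℕ) = j := by omega
      rwa [hfA u (by omega), hu2] at hc
  -- totality facts
  have hTA : ∀ j, j < n → colA n f j ≠ ∅ →
      colB n f j ≠ ∅ ∨ (j ≠ 0 ∧ colA n f (j - 1) ≠ ∅) ∨
        (j + 1 < n ∧ colA n f (j + 1) ≠ ∅) := by
    intro j hj hne
    obtain ⟨u, -, hufne, hadj⟩ :=
      hf.2 (0, ⟨j, hj⟩) (by rw [← colA_eq n f j hj]; exact hne)
    rcases hadj with h | h <;> rw [adj_iff] at h <;> simp only at h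
    · rcases h with ⟨h1, h2⟩ | ⟨h1, h2⟩
      · right; left
        refine ⟨by omega, ?_⟩
        have hu2 : (u.2 : ℕ) = j - 1 := by omega
        rwa [hfA u (by omega), hu2] at hufne
      · omega
    · rcases h with ⟨h1, h2⟩ | ⟨h1, h2⟩
      · right; right
        have hu2 : (u.2 : ℕ) = j + 1 := by omega
        refine ⟨by rw [← hu2]; exact u.2.isLt, ?_⟩
        rwa [hfA u (by omega), hu2] at hufne
      · left
        have hu2 : (u.2 : ℕ) = j := by omega
        rwa [hfB u (by omega), hu2] at hufne
  have hTB : ∀ j, j < n → colB n f j ≠ ∅ →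
      colA n f j ≠ ∅ ∨ (j ≠ 0 ∧ colB n f (j - 1) ≠ ∅) ∨
        (j + 1 < n ∧ colB n f (j + 1) ≠ ∅) := by
    intro j hj hne
    obtain ⟨u, -, hufne, hadj⟩ :=
      hf.2 (1, ⟨j, hj⟩) (by rw [← colB_eq n f j hj]; exact hne)
    rcases hadj with h | h <;> rw [adj_iff] at h <;> simp only at h
    · rcases h with ⟨h1, h2⟩ | ⟨h1, h2⟩
      · right; left
        refine ⟨by omega, ?_⟩
        have hu2 : (u.2 : ℕ) = j - 1 := by omega
        rwa [hfB u (by omega), hu2] at hufne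
      · left
        have hu2 : (u.2 : ℕ) = j := by omega
        rwa [hfA u (by omega), hu2] at hufne
    · rcases h with ⟨h1, h2⟩ | ⟨h1, h2⟩
      · right; right
        have hu2 : (u.2 : ℕ) = j + 1 := by omega
        refine ⟨by rw [← hu2]; exact u.2.isLt, ?_⟩
        rwa [hfB u (by omega), hu2] at hufne
      · omega
  -- pending resolution
  have hPA : ∀ j, j < n → pendA n f j = true → j + 1 < n ∧ colA n f (j + 1) ≠ ∅ := by
    intro j hj hp
    rw [pendA, decide_eq_true_eq] at hp
    obtain ⟨h1, h2, h3⟩ := hp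
    rcases hTA j hj h1 with h | ⟨h4, h5⟩ | h
    · exact absurd h2 h
    · rcases h3 with h3 | h3
      · exact absurd h3 h4
      · exact absurd h3 h5
    · exact h
  have hPB : ∀ j, j < n → pendB n f j = true → j + 1 < n ∧ colB n f (j + 1) ≠ ∅ := by
    intro j hj hp
    rw [pendB, decide_eq_true_eq] at hp
    obtain ⟨h1, h2, h3⟩ := hp
    rcases hTB j hj h1 with h | ⟨h4, h5⟩ | h
    · exact absurd h2 h
    · rcases h3 with h3 | h3
      · exact absurd h3 h4
      · exact absurd h3 h5
    · exact h
  -- main induction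
  have main : ∀ j, 1 ≤ j → j ≤ n →
      3 * j + Phi (colA n f (j - 1)) (colB n f (j - 1)) (pendA n f (j - 1)) (pendB n f (j - 1))
        ≤ 2 * ∑ i ∈ Finset.range j, ((colA n f i).card + (colB n f i).card) := by
    intro j hj1
    induction j, hj1 using Nat.le_induction with
    | base =>
      intro _
      simp only [Finset.sum_range_one]
      have h1 : colA n f 0 ≠ ∅ := fun h => (hA0 0 hn h).1 rfl
      have h2 : colB n f 0 = ∅ → colA n f 0 = Finset.univ := by
        intro h
        have h3 := hB0 0 hn h
        rwa [show (0 : ℕ) - 1 = 0 from rfl, h, Finset.empty_union] at h3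
      have hs := start_key (colA n f 0) (colB n f 0) h1 h2
      have e1 : pendA n f 0 = decide (colA n f 0 ≠ ∅ ∧ colB n f 0 = ∅) := by
        rw [pendA]
        exact decide_eq_decide.mpr (by tauto)
      have e2 : pendB n f 0 = decide (colB n f 0 ≠ ∅ ∧ colA n f 0 = ∅) := by
        rw [pendB]
        exact decide_eq_decide.mpr (by tauto)
      rw [show (1 : ℕ) - 1 = 0 from rfl, e1, e2]
      omega
    | succ j hj ih =>
      intro hjn
      have hjn' : j < n := by omega
      have ihh := ih (by omega)
      rw [Finset.sum_range_succ]
      have hj0 : j ≠ 0 := by omega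
      have h5 : pendA n f (j - 1) = true → colA n f j ≠ ∅ := by
        intro hp
        have := (hPA (j - 1) (by omega) hp).2
        rwa [show j - 1 + 1 = j from by omega] at this
      have h6 : pendB n f (j - 1) = true → colB n f j ≠ ∅ := by
        intro hp
        have := (hPB (j - 1) (by omega) hp).2
        rwa [show j - 1 + 1 = j from by omega] at this
      have tk := trans_key (colA n f (j - 1)) (colB n f (j - 1)) (colA n f j) (colB n f j)
        (pendA n f (j - 1)) (pendB n f (j - 1))
        (fun hp => by
          rw [pendA, decide_eq_true_eq] at hp
          exact ⟨hp.1, hp.2.1⟩)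
        (fun hp => by
          rw [pendB, decide_eq_true_eq] at hp
          exact ⟨hp.1, hp.2.1⟩)
        (fun h => (hA0 j hjn' h).2)
        (hB0 j hjn')
        h5 h6
      have e1 : decide (colA n f j ≠ ∅ ∧ colB n f j = ∅ ∧ colA n f (j - 1) = ∅)
          = pendA n f j := by
        rw [pendA]
        exact decide_eq_decide.mpr (by constructor <;> intro h <;> tauto)
      have e2 : decide (colB n f j ≠ ∅ ∧ colA n f j = ∅ ∧ colB n f (j - 1) = ∅)
          = pendB n f j := by
        rw [pendB]
        exact decide_eq_decide.mpr (by constructor <;> intro h <;> tauto)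
      rw [e1, e2] at tk
      rw [show j + 1 - 1 = j from by omega]
      omega
  have hmain := main n hn le_rfl
  have hsum : ∑ v : Fin 2 × Fin n, (f v).card
      = ∑ i ∈ Finset.range n, ((colA n f i).card + (colB n f i).card) := by
    rw [Fintype.sum_prod_type, Fin.sum_univ_two, Finset.sum_range, ← Finset.sum_add_distrib]
    apply Finset.sum_congr rfl
    intro j _
    rw [colA_eq n f _ j.isLt, colB_eq n f _ j.isLt]
  rw [hsum]
  omega

/-! ### Upper bound construction -/

def gfun (n : ℕ) : Fin 2 × Fin n → Finset (Fin 2) := fun p =>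
  if (p.2 : ℕ) = 0 ∨ (p.2 : ℕ) % 2 = n % 2 then {0}
  else if p.1 = 0 then {1} else ∅

lemma gfun_isTkRDF (n : ℕ) (hn : 1 ≤ n) : IsTkRDF 2 (pathProdAdj 2 n) (gfun n) := by
  constructor
  · -- rainbow
    intro v hv c
    by_cases hA : (v.2 : ℕ) = 0 ∨ (v.2 : ℕ) % 2 = n % 2
    · exact absurd hv (by simp [gfun, hA])
    · by_cases h0 : v.1 = 0
      · exact absurd hv (by simp [gfun, hA, h0])
      · have hv1 : (v.1 : ℕ) = 1 := by
          have h1 := v.1.isLt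
          have h2 : (v.1 : ℕ) ≠ 0 := fun h => h0 (Fin.ext h)
          omega
        have hj0 : (v.2 : ℕ) ≠ 0 := fun h => hA (Or.inl h)
        have hpar : (v.2 : ℕ) % 2 ≠ n % 2 := fun h => hA (Or.inr h)
        have hjlt := v.2.isLt
        fin_cases c
        · -- color 0 : from (1, j-1)
          refine ⟨(1, ⟨(v.2 : ℕ) - 1, by omega⟩), ?_, ?_⟩
          · rw [adj_iff]
            left
            constructor
            · simp [hv1]
            · simp; omega
          · have hA' : ((v.2 : ℕ) - 1 = 0 ∨ ((v.2 : ℕ) - 1) % 2 = n % 2) := by omega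
            simp [gfun, hA']
        · -- color 1 : from (0, j)
          refine ⟨(0, v.2), ?_, ?_⟩
          · rw [adj_iff]
            right
            exact ⟨rfl, by simp [hv1]⟩
          · simp [gfun, hA]
  · -- totality
    intro v hv
    by_cases hA : (v.2 : ℕ) = 0 ∨ (v.2 : ℕ) % 2 = n % 2
    · by_cases h0 : v.1 = 0
      · refine ⟨(1, v.2), ?_, ?_, Or.inr ?_⟩
        · intro h
          have h1 : (1 : Fin 2) = v.1 := congrArg Prod.fst h
          rw [h0] at h1
          exact absurd h1 (by decide)
        · simp [gfun, hA]
        · rw [adj_iff]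
          right
          exact ⟨rfl, by simp [h0]⟩
      · refine ⟨(0, v.2), ?_, ?_, Or.inl ?_⟩
        · intro h
          exact h0 (congrArg Prod.fst h).symm
        · simp [gfun, hA]
        · rw [adj_iff]
          right
          refine ⟨rfl, ?_⟩
          have hv1 : (v.1 : ℕ) = 1 := by
            have h1 := v.1.isLt
            have h2 : (v.1 : ℕ) ≠ 0 := fun h => h0 (Fin.ext h)
            omega
          simp [hv1]
    · have h0 : v.1 = 0 := by
        by_contra h0
        exact hv (by simp [gfun, hA, h0])
      have hj0 : (v.2 : ℕ) ≠ 0 := fun h => hA (Or.inl h)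
      have hpar : (v.2 : ℕ) % 2 ≠ n % 2 := fun h => hA (Or.inr h)
      have hjlt := v.2.isLt
      refine ⟨(0, ⟨(v.2 : ℕ) - 1, by omega⟩), ?_, ?_, Or.inl ?_⟩
      · intro h
        have h1 := congrArg (fun p : Fin 2 × Fin n => (p.2 : ℕ)) h
        simp at h1
        omega
      · have hA' : ((v.2 : ℕ) - 1 = 0 ∨ ((v.2 : ℕ) - 1) % 2 = n % 2) := by omega
        simp [gfun, hA']
      · rw [adj_iff]
        left
        constructor
        · simp [h0]
        · simp; omega

lemma gfun_weight (n : ℕ) : ∑ v : Fin 2 × Fin n, ((gfun n) v).card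
    = ∑ j ∈ Finset.range n, (if j = 0 ∨ j % 2 = n % 2 then 2 else 1) := by
  rw [Fintype.sum_prod_type, Fin.sum_univ_two, Finset.sum_range, ← Finset.sum_add_distrib]
  apply Finset.sum_congr rfl
  intro j _
  by_cases hA : (j : ℕ) = 0 ∨ (j : ℕ) % 2 = n % 2
  · simp [gfun, hA]
  · simp [gfun, hA]

lemma Tsum : ∀ n : ℕ, 1 ≤ n →
    (∑ j ∈ Finset.range n, if j = 0 ∨ j % 2 = n % 2 then 2 else 1) = (3 * n + 1) / 2 := by
  intro n
  induction n using Nat.strong_induction_on with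
  | _ n ih =>
    rcases n with _ | _ | _ | m
    · intro h; omega
    · intro _; simp
    · intro _; decide
    · intro _
      rw [Finset.sum_range_succ, Finset.sum_range_succ]
      have e1 : (∑ j ∈ Finset.range (m + 1), if j = 0 ∨ j % 2 = (m + 3) % 2 then 2 else 1)
          = ∑ j ∈ Finset.range (m + 1), if j = 0 ∨ j % 2 = (m + 1) % 2 then 2 else 1 := by
        apply Finset.sum_congr rfl
        intro j _
        have h3 : (m + 3) % 2 = (m + 1) % 2 := by omega
        rw [h3]
      rw [show m + 3 = m + 1 + 1 + 1 from rfl] at *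
      rw [e1, ih (m + 1) (by omega) (by omega)]
      have h1 : (m + 1 + 1 = 0 ∨ (m + 1 + 1) % 2 = (m + 1 + 1 + 1) % 2) → False := by omega
      have h2 : (m + 1 = 0 ∨ (m + 1) % 2 = (m + 1 + 1 + 1) % 2) := by omega
      rw [if_pos h2, if_neg h1]
      omega

theorem tr2_P2_Pn (n : ℕ) (hn : 2 ≤ n) :
    tkRainbow 2 (pathProdAdj 2 n) = (3 * n + 1) / 2 := by
  have hn1 : 1 ≤ n := by omega
  have hmem : (3 * n + 1) / 2 ∈ {w | ∃ f : Fin 2 × Fin n → Finset (Fin 2),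
      IsTkRDF 2 (pathProdAdj 2 n) f ∧ ∑ v, (f v).card = w} :=
    ⟨gfun n, gfun_isTkRDF n hn1, by rw [gfun_weight n, Tsum n hn1]⟩
  apply le_antisymm
  · exact Nat.sInf_le hmem
  · apply le_csInf ⟨_, hmem⟩
    rintro w ⟨f, hf, rfl⟩
    have hlb := lower_bound_s12 n hn1 f hf
    omega
end

section
/- Let n ≥ 2 and let f be a minimum-weight total 2-rainbow dominating function on P₂ □ P_n that minimizes the number of vertices assigned ∅. Then setting a_j = |f((0,j))| + |f((1,j))|, one has a₀ ≥ 2 and a_j + a_{j+1} ≥ 3 for every j ∈ {0,…,n−2}. -/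
open Finset

lemma adj_from_one {n : ℕ} (u : Fin 2 × Fin n) (k : Fin n) (h : pathProdAdj 2 n (1, k) u) :
    u.1 = 1 ∧ (k : ℕ) + 1 = (u.2 : ℕ) := by
  rcases h with ⟨h1, h2⟩ | ⟨h1, h2⟩
  · exact ⟨h1.symm, h2⟩
  · exfalso
    have := u.1.isLt
    simp at h2
    omega


lemma adj_to_zero {n : ℕ} (u : Fin 2 × Fin n) (k : Fin n) (h : pathProdAdj 2 n u (0, k)) :
    u.1 = 0 ∧ (u.2 : ℕ) + 1 = (k : ℕ) := by
  rcases h with ⟨h1, h2⟩ | ⟨h1, h2⟩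
  · exact ⟨h1, h2⟩
  · simp at h2

lemma adj_to_one {n : ℕ} (u : Fin 2 × Fin n) (k : Fin n) (h : pathProdAdj 2 n u (1, k)) :
    (u.1 = 1 ∧ (u.2 : ℕ) + 1 = (k : ℕ)) ∨ u = (0, k) := by
  rcases h with ⟨h1, h2⟩ | ⟨h1, h2⟩
  · exact Or.inl ⟨h1, h2⟩
  · right
    have : (u.1 : ℕ) = 0 := by simpa using h2
    exact Prod.ext (Fin.ext this) h1

lemma rainbow0 {n : ℕ} {f : Fin 2 × Fin n → Finset (Fin 2)}
    (hf : IsKRDF 2 (pathProdAdj 2 n) f) (k : ℕ) (hk : k < n)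
    (h : f (0, ⟨k, hk⟩) = ∅) :
    ∃ _ : 1 ≤ k, f (0, ⟨k - 1, by omega⟩) = Finset.univ := by
  have key : ∀ c : Fin 2, 1 ≤ k ∧ c ∈ f (0, ⟨k - 1, by omega⟩) := by
    intro c
    obtain ⟨u, hadj, hc⟩ := hf _ h c
    obtain ⟨h1, h2⟩ := adj_to_zero u _ hadj
    simp only [Fin.val_mk] at h2  -- h2 : u.2.val + 1 = k
    have hk1 : 1 ≤ k := by omega
    have hu : u = (0, ⟨k - 1, by omega⟩) := by
      refine Prod.ext h1 (Fin.ext ?_)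
      simp; omega
    rw [hu] at hc
    exact ⟨hk1, hc⟩
  obtain ⟨hk1, _⟩ := key 0
  refine ⟨hk1, ?_⟩
  apply Finset.eq_univ_iff_forall.mpr
  intro c
  exact (key c).2

lemma rainbow1 {n : ℕ} {f : Fin 2 × Fin n → Finset (Fin 2)}
    (hf : IsKRDF 2 (pathProdAdj 2 n) f) (k : ℕ) (hk : k < n)
    (h : f (1, ⟨k, hk⟩) = ∅) (c : Fin 2) :
    (∃ _ : 1 ≤ k, c ∈ f (1, ⟨k - 1, by omega⟩)) ∨ c ∈ f (0, ⟨k, hk⟩) := by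
  obtain ⟨u, hadj, hc⟩ := hf _ h c
  rcases adj_to_one u _ hadj with ⟨h1, h2⟩ | h1
  · left
    simp only [Fin.val_mk] at h2
    have hk1 : 1 ≤ k := by omega
    have hu : u = (1, ⟨k - 1, by omega⟩) := by
      refine Prod.ext h1 (Fin.ext ?_); simp; omega
    rw [hu] at hc
    exact ⟨hk1, hc⟩
  · right; rwa [h1] at hc

theorem tr2_P2_Pn_columns (n : ℕ) (hn : 2 ≤ n)
    (f : Fin 2 × Fin n → Finset (Fin 2))
    (hf : IsTkRDF 2 (pathProdAdj 2 n) f)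
    (hw : ∀ g : Fin 2 × Fin n → Finset (Fin 2), IsTkRDF 2 (pathProdAdj 2 n) g →
      ∑ v, (f v).card ≤ ∑ v, (g v).card)
    (he : ∀ g : Fin 2 × Fin n → Finset (Fin 2), IsTkRDF 2 (pathProdAdj 2 n) g →
      ∑ v, (g v).card = ∑ v, (f v).card →
      (Finset.univ.filter fun v => f v = ∅).card ≤
        (Finset.univ.filter fun v => g v = ∅).card) :
    2 ≤ (f (0, ⟨0, by omega⟩)).card + (f (1, ⟨0, by omega⟩)).card ∧
    ∀ j : ℕ, ∀ hj : j + 1 < n,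
      3 ≤ (f (0, ⟨j, by omega⟩)).card + (f (1, ⟨j, by omega⟩)).card +
        ((f (0, ⟨j + 1, hj⟩)).card + (f (1, ⟨j + 1, hj⟩)).card) := by
  constructor
  · -- first column has weight >= 2
    have h00 : f (0, (⟨0, by omega⟩ : Fin n)) ≠ ∅ := by
      intro h
      obtain ⟨h1, -⟩ := rainbow0 hf.1 0 (by omega) h
      omega
    by_cases h10 : f (1, (⟨0, by omega⟩ : Fin n)) = ∅
    · have huniv : f (0, (⟨0, by omega⟩ : Fin n)) = Finset.univ := by
        apply Finset.eq_univ_iff_forall.mpr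
        intro c
        rcases rainbow1 hf.1 0 (by omega) h10 c with ⟨h1, -⟩ | hc
        · omega
        · exact hc
      rw [huniv, h10]
      simp
    · have h1 : 0 < (f (0, (⟨0, by omega⟩ : Fin n))).card :=
        card_pos.mpr (nonempty_iff_ne_empty.mpr h00)
      have h2 : 0 < (f (1, (⟨0, by omega⟩ : Fin n))).card :=
        card_pos.mpr (nonempty_iff_ne_empty.mpr h10)
      omega
  · intro j hj
    by_contra hcon
    push_neg at hcon
    have hcon : (f (0, ⟨j, by omega⟩)).card + (f (1, ⟨j, by omega⟩)).card +
        ((f (0, ⟨j + 1, hj⟩)).card + (f (1, ⟨j + 1, hj⟩)).card) < 3 := hcon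
    have hjn : j < n := by omega
    -- Step 1: f (0, j+1) ≠ ∅
    have hC : f (0, ⟨j + 1, hj⟩) ≠ ∅ := by
      intro hC
      obtain ⟨h1x, hA⟩ := rainbow0 hf.1 (j+1) hj hC
      have hcA : (f (0, (⟨j, hjn⟩ : Fin n))).card = 2 := by
        have hA' : f (0, (⟨j, hjn⟩ : Fin n)) = Finset.univ := hA
        rw [hA']; simp
      rw [hcA, hC] at hcon
      simp only [card_empty] at hcon
      -- so card B = 0 and card D = 0
      have hB : f (1, (⟨j, hjn⟩ : Fin n)) = ∅ :=
        card_eq_zero.mp (by omega)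
      have hD : f (1, ⟨j + 1, hj⟩) = ∅ :=
        card_eq_zero.mp (by omega)
      rcases rainbow1 hf.1 (j+1) hj hD 0 with ⟨hxx, hm⟩ | hm
      · have hm' : (0 : Fin 2) ∈ f (1, (⟨j, hjn⟩ : Fin n)) := hm
        rw [hB] at hm'; simp at hm'
      · rw [hC] at hm; simp at hm
    have hCcard : 1 ≤ (f (0, ⟨j + 1, hj⟩)).card :=
      card_pos.mpr (nonempty_iff_ne_empty.mpr hC)
    -- Step 2: f (0, j) = ∅
    have hA : f (0, (⟨j, hjn⟩ : Fin n)) = ∅ := by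
      by_contra hA
      have h1 : 1 ≤ (f (0, (⟨j, hjn⟩ : Fin n))).card :=
        card_pos.mpr (nonempty_iff_ne_empty.mpr hA)
      have h1' : 1 ≤ (f (0, (⟨j, by omega⟩ : Fin n))).card := h1
      have hB : f (1, (⟨j, hjn⟩ : Fin n)) = ∅ := by
        apply card_eq_zero.mp
        have : (f (1, (⟨j, by omega⟩ : Fin n))).card = 0 := by omega
        exact this
      have hD : f (1, ⟨j + 1, hj⟩) = ∅ := card_eq_zero.mp (by omega)
      have hCu : f (0, ⟨j + 1, hj⟩) = Finset.univ := by
        apply Finset.eq_univ_iff_forall.mpr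
        intro c
        rcases rainbow1 hf.1 (j+1) hj hD c with ⟨hxx, hm⟩ | hm
        · exfalso
          have hm' : c ∈ f (1, (⟨j, hjn⟩ : Fin n)) := hm
          rw [hB] at hm'; simp at hm'
        · exact hm
      have : (f (0, ⟨j + 1, hj⟩)).card = 2 := by rw [hCu]; simp
      omega
    obtain ⟨hj1, hP⟩ := rainbow0 hf.1 j hjn hA
    -- hP : f (0, ⟨j-1⟩) = univ
    have hQ : f (1, (⟨j - 1, by omega⟩ : Fin n)) ≠ ∅ := by
      by_cases hB : f (1, (⟨j, hjn⟩ : Fin n)) = ∅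
      · rcases rainbow1 hf.1 j hjn hB 0 with ⟨hxx, hm⟩ | hm
        · exact fun e => by rw [e] at hm; simp at hm
        · exfalso; rw [hA] at hm; simp at hm
      · -- B ≠ ∅, so D = ∅, and totality of (1,j) forces f(1,j-1) ≠ ∅
        have hBc : 1 ≤ (f (1, (⟨j, hjn⟩ : Fin n))).card :=
          card_pos.mpr (nonempty_iff_ne_empty.mpr hB)
        have hBc' : 1 ≤ (f (1, (⟨j, by omega⟩ : Fin n))).card := hBc
        have hD : f (1, ⟨j + 1, hj⟩) = ∅ := by
          apply card_eq_zero.mp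
          have hAc : (f (0, (⟨j, by omega⟩ : Fin n))).card = 0 := by
            have : f (0, (⟨j, by omega⟩ : Fin n)) = ∅ := hA
            rw [this]; simp
          omega
        obtain ⟨u, hne, hfu, hadj⟩ := hf.2 (1, (⟨j, hjn⟩ : Fin n)) hB
        rcases hadj with h | h
        · rcases adj_to_one u _ h with ⟨h1, h2⟩ | h1
          · have hu : u = (1, (⟨j - 1, by omega⟩ : Fin n)) := by
              refine Prod.ext h1 (Fin.ext ?_)
              simp only [Fin.val_mk] at h2 ⊢
              omega
            rwa [hu] at hfu
          · rw [h1] at hfu; exact absurd hA hfu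
        · obtain ⟨h1, h2⟩ := adj_from_one u _ h
          have hu : u = (1, ⟨j + 1, hj⟩) := by
            refine Prod.ext h1 (Fin.ext ?_)
            simp only [Fin.val_mk] at h2 ⊢
            omega
          rw [hu] at hfu; exact absurd hD hfu

    -- the swap construction
    set p : Fin 2 × Fin n := (0, (⟨j - 1, by omega⟩ : Fin n)) with hpdef
    set q : Fin 2 × Fin n := (0, (⟨j, hjn⟩ : Fin n)) with hqdef
    have hPf : f p = Finset.univ := hP
    have hAf : f q = ∅ := hA
    have hpq : p ≠ q := by
      rw [hpdef, hqdef]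
      intro e
      rw [Prod.ext_iff] at e
      have := e.2
      rw [Fin.ext_iff] at this
      simp only [Fin.val_mk] at this
      omega
    set g : Fin 2 × Fin n → Finset (Fin 2) :=
      fun v => if v = p ∨ v = q then {0} else f v with hgdef
    have hgp : g p = {0} := by rw [hgdef]; simp
    have hgq : g q = {0} := by rw [hgdef]; simp
    have hgo : ∀ v : Fin 2 × Fin n, v ≠ p → v ≠ q → g v = f v := by
      intro v h1 h2
      rw [hgdef]
      simp [h1, h2]
    have hgne : ∀ v, f v ≠ ∅ → g v ≠ ∅ := by
      intro v hv
      by_cases h1 : v = p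
      · rw [h1, hgp]; simp
      · by_cases h2 : v = q
        · rw [h2, hgq]; simp
        · rwa [hgo v h1 h2]
    have hadjpq : pathProdAdj 2 n p q := by
      rw [hpdef, hqdef]
      left
      refine ⟨rfl, ?_⟩
      simp only [Fin.val_mk]
      omega
    have hTk : IsTkRDF 2 (pathProdAdj 2 n) g := by
      constructor
      · intro v hv c
        have hvp : v ≠ p := by intro e; rw [e, hgp] at hv; simp at hv
        have hvq : v ≠ q := by intro e; rw [e, hgq] at hv; simp at hv
        have hfv : f v = ∅ := by rwa [hgo v hvp hvq] at hv
        obtain ⟨u, hadj, hc⟩ := hf.1 v hfv c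
        refine ⟨u, hadj, ?_⟩
        have huq : u ≠ q := by intro e; rw [e, hAf] at hc; simp at hc
        by_cases h1 : u = p
        · exfalso
          rw [h1, hpdef] at hadj
          rcases hadj with ⟨e1, e2⟩ | ⟨e1, e2⟩
          · -- v = q
            apply hvq
            rw [hqdef]
            refine Prod.ext e1.symm (Fin.ext ?_)
            simp only [Fin.val_mk] at e2 ⊢
            omega
          · -- v = (1, j-1), contradiction with hQ
            apply hQ
            have hv1 : v = (1, (⟨j - 1, by omega⟩ : Fin n)) := by
              refine Prod.ext (Fin.ext ?_) ?_
              · simp only [Fin.val_mk] at e2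
                have := v.1.isLt
                simp only [Fin.val_one]
                omega
              · exact e1.symm
            rwa [hv1] at hfv
        · rw [hgo u h1 huq]; exact hc
      · intro v hv
        by_cases h1 : v = p
        · subst h1
          exact ⟨q, Ne.symm hpq, by rw [hgq]; simp, Or.inr hadjpq⟩
        · by_cases h2 : v = q
          · subst h2
            exact ⟨p, hpq, by rw [hgp]; simp, Or.inl hadjpq⟩
          · have hfv : f v ≠ ∅ := by
              rw [hgo v h1 h2] at hv; exact hv
            obtain ⟨u, hne, hfu, hadj⟩ := hf.2 v hfv
            exact ⟨u, hne, hgne u hfu, hadj⟩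
    -- weight equality
    have hsum : ∑ v, (g v).card = ∑ v, (f v).card := by
      have hsub : ({p, q} : Finset (Fin 2 × Fin n)) ⊆ Finset.univ := subset_univ _
      have hsplit : ∀ F : Fin 2 × Fin n → ℕ,
          ∑ v, F v = ∑ v ∈ Finset.univ \ {p, q}, F v + ∑ v ∈ {p, q}, F v :=
        fun F => (Finset.sum_sdiff hsub).symm
      rw [hsplit (fun v => (g v).card), hsplit (fun v => (f v).card)]
      congr 1
      · apply Finset.sum_congr rfl
        intro v hv
        simp only [mem_sdiff, mem_insert, mem_singleton, mem_univ, true_and] at hv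
        push_neg at hv
        rw [hgo v hv.1 hv.2]
      · rw [Finset.sum_pair hpq, Finset.sum_pair hpq, hgp, hgq, hPf, hAf]
        simp
    -- fewer empties
    have hqmem : q ∈ Finset.univ.filter (fun v => f v = ∅) :=
      mem_filter.mpr ⟨mem_univ _, hAf⟩
    have hfil : Finset.univ.filter (fun v => g v = ∅) =
        (Finset.univ.filter fun v => f v = ∅).erase q := by
      ext v
      simp only [mem_filter, mem_erase, mem_univ, true_and]
      constructor
      · intro hv
        have hvp : v ≠ p := by intro e; rw [e, hgp] at hv; simp at hv
        have hvq : v ≠ q := by intro e; rw [e, hgq] at hv; simp at hv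
        exact ⟨hvq, by rwa [hgo v hvp hvq] at hv⟩
      · rintro ⟨hvq, hfv⟩
        have hvp : v ≠ p := by
          intro e; rw [e, hPf] at hfv
          exact (Finset.univ_nonempty.ne_empty) hfv
        rw [hgo v hvp hvq]; exact hfv
    have hlt : (Finset.univ.filter fun v => g v = ∅).card <
        (Finset.univ.filter fun v => f v = ∅).card := by
      rw [hfil, Finset.card_erase_of_mem hqmem]
      have : 0 < (Finset.univ.filter fun v => f v = ∅).card :=
        card_pos.mpr ⟨q, hqmem⟩
      omega
    have := he g hTk hsum
    omega
end

section
/- Let n ≥ 2 and let f be a minimum-weight total 3-rainbow dominating function on P₂ □ P_n that minimizes the number of vertices assigned ∅. Then for every column j ∈ {0,…,n−1}, |f((0,j))| + |f((1,j))| ≥ 2. -/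
open Finset

/- ## helpers -/

lemma trdf_of_local {V : Type*} {k : ℕ} {Adj : V → V → Prop} {f g : V → Finset (Fin k)}
    (hf : IsTkRDF k Adj f)
    (hmono : ∀ v, f v ≠ ∅ → g v ≠ ∅)
    (hemp : ∀ v, g v = ∅ → f v = ∅)
    (hrain : ∀ v, g v = ∅ → ∀ (c : Fin k) (u : V), Adj u v → c ∈ f u →
      ∃ u', Adj u' v ∧ c ∈ g u')
    (hnew : ∀ v, g v ≠ ∅ → f v = ∅ → ∃ u, u ≠ v ∧ g u ≠ ∅ ∧ (Adj u v ∨ Adj v u)) :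
    IsTkRDF k Adj g := by
  refine ⟨fun v hv c => ?_, fun v hv => ?_⟩
  · obtain ⟨u, hu, hc⟩ := hf.1 v (hemp v hv) c
    exact hrain v hv c u hu hc
  · by_cases hfv : f v = ∅
    · exact hnew v hv hfv
    · obtain ⟨u, hne, hu, hadj⟩ := hf.2 v hfv
      exact ⟨u, hne, hmono u hu, hadj⟩

lemma tr3_sum_split {V : Type*} [Fintype V] [DecidableEq V] (F G : V → ℕ) (S : Finset V)
    (h : ∀ v ∉ S, G v = F v) :
    ∃ R, (∑ v, G v = R + ∑ v ∈ S, G v) ∧ (∑ v, F v = R + ∑ v ∈ S, F v) := by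
  refine ⟨∑ v ∈ Sᶜ, F v, ?_, ?_⟩
  · rw [← Finset.sum_compl_add_sum S G]
    congr 1
    exact Finset.sum_congr rfl fun v hv => h v (Finset.mem_compl.mp hv)
  · rw [← Finset.sum_compl_add_sum S F]

lemma tr3_card_lt {V : Type*} [Fintype V] [DecidableEq V]
    (f g : V → Finset (Fin 3))
    (hsub : ∀ v, g v = ∅ → f v = ∅) (w : V) (hw1 : f w = ∅) (hw2 : g w ≠ ∅) :
    (Finset.univ.filter fun v => g v = ∅).card < (Finset.univ.filter fun v => f v = ∅).card := by
  have hsubset : (Finset.univ.filter fun v => g v = ∅) ⊆ (Finset.univ.filter fun v => f v = ∅) := by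
    intro v hv
    simp only [mem_filter, mem_univ, true_and] at hv ⊢
    exact hsub v hv
  exact Finset.card_lt_card ((Finset.ssubset_iff_of_subset hsubset).mpr
    ⟨w, by simp [hw1], by simp [hw2]⟩)

/- ## adjacency classification in P2 □ Pn -/

lemma tr3_adj_h {n : ℕ} {j j1 : Fin n} (hj1 : (j1 : ℕ) + 1 = (j : ℕ)) (i : Fin 2) :
    pathProdAdj 2 n (i, j1) (i, j) := Or.inl ⟨rfl, hj1⟩

lemma tr3_adj_v {n : ℕ} (j : Fin n) : pathProdAdj 2 n (0, j) (1, j) := Or.inr ⟨rfl, rfl⟩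

lemma tr3_in0 {n : ℕ} {j j1 : Fin n} (hj1 : (j1 : ℕ) + 1 = (j : ℕ)) {u : Fin 2 × Fin n}
    (h : pathProdAdj 2 n u (0, j)) : u = (0, j1) := by
  obtain ⟨a, b⟩ := u
  rcases h with ⟨h1, h2⟩ | ⟨h1, h2⟩
  · simp only at h1 h2
    subst h1
    have : b = j1 := Fin.ext (by omega)
    rw [this]
  · simp only [Fin.val_zero] at h2
    omega

lemma tr3_in1 {n : ℕ} {j j1 : Fin n} (hj1 : (j1 : ℕ) + 1 = (j : ℕ)) {u : Fin 2 × Fin n}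
    (h : pathProdAdj 2 n u (1, j)) : u = (1, j1) ∨ u = (0, j) := by
  obtain ⟨a, b⟩ := u
  rcases h with ⟨h1, h2⟩ | ⟨h1, h2⟩
  · simp only at h1 h2
    subst h1
    have : b = j1 := Fin.ext (by omega)
    rw [this]; left; rfl
  · simp only [Fin.val_one] at h1 h2
    subst h1
    have : a = 0 := Fin.ext (by simp only [Fin.val_zero]; omega)
    rw [this]; right; rfl

lemma tr3_out0 {n : ℕ} {j j1 : Fin n} (hj1 : (j1 : ℕ) + 1 = (j : ℕ)) {v : Fin 2 × Fin n}
    (h : pathProdAdj 2 n (0, j1) v) : v = (1, j1) ∨ v = (0, j) := by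
  obtain ⟨a, b⟩ := v
  rcases h with ⟨h1, h2⟩ | ⟨h1, h2⟩
  · simp only at h1 h2
    have ha : a = 0 := h1.symm
    have : b = j := Fin.ext (by omega)
    rw [ha, this]; right; rfl
  · simp only [Fin.val_zero] at h1 h2
    have : a = 1 := Fin.ext (by simp only [Fin.val_one]; omega)
    rw [this, ← h1]; left; rfl

lemma tr3_out1 {n : ℕ} {j j1 : Fin n} (hj1 : (j1 : ℕ) + 1 = (j : ℕ)) {v : Fin 2 × Fin n}
    (h : pathProdAdj 2 n (1, j1) v) : v = (1, j) := by
  obtain ⟨a, b⟩ := v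
  rcases h with ⟨h1, h2⟩ | ⟨h1, h2⟩
  · simp only at h1 h2
    have ha : a = 1 := h1.symm
    have : b = j := Fin.ext (by omega)
    rw [ha, this]
  · simp only [Fin.val_one] at h2
    have := a.isLt
    omega

lemma tr3_nin1 {n : ℕ} {j : Fin n} (hj : (j : ℕ) = 0) {u : Fin 2 × Fin n}
    (h : pathProdAdj 2 n u (1, j)) : u = (0, j) := by
  obtain ⟨a, b⟩ := u
  rcases h with ⟨h1, h2⟩ | ⟨h1, h2⟩
  · simp only at h2
    omega
  · simp only [Fin.val_one] at h1 h2
    subst h1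
    have : a = 0 := Fin.ext (by simp only [Fin.val_zero]; omega)
    rw [this]

/-- Case A: both cells of column j empty. -/
lemma tr3_caseA {n : ℕ} (f : Fin 2 × Fin n → Finset (Fin 3))
    (hf : IsTkRDF 3 (pathProdAdj 2 n) f)
    (he : ∀ g : Fin 2 × Fin n → Finset (Fin 3), IsTkRDF 3 (pathProdAdj 2 n) g →
      ∑ v, (g v).card = ∑ v, (f v).card →
      (Finset.univ.filter fun v => f v = ∅).card ≤
        (Finset.univ.filter fun v => g v = ∅).card)
    (j j1 : Fin n) (hj1 : (j1 : ℕ) + 1 = (j : ℕ))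
    (h0 : f (0, j) = ∅) (h1 : f (1, j) = ∅) : False := by
  classical
  have hA1 : f (1, j1) = Finset.univ := by
    rw [Finset.eq_univ_iff_forall]
    intro c
    obtain ⟨u, hu, hc⟩ := hf.1 (1, j) h1 c
    rcases tr3_in1 hj1 hu with h | h
    · rwa [h] at hc
    · rw [h, h0] at hc; exact absurd hc (by simp)
  set g : Fin 2 × Fin n → Finset (Fin 3) :=
    fun v => if v = (1, j1) then {0} else if v = (1, j) then {1, 2} else f v with hgdef
  have hnejj : ((1, j) : Fin 2 × Fin n) ≠ (1, j1) := by
    intro h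
    have := congrArg (fun p => ((p.2 : Fin n) : ℕ)) h
    simp only at this
    omega
  have hnejj' : ((1, j1) : Fin 2 × Fin n) ≠ (1, j) := hnejj.symm
  have hg1 : g (1, j1) = {0} := by simp [hgdef]
  have hg2 : g (1, j) = {1, 2} := by simp [hgdef, hnejj]
  have hgoth : ∀ v, v ≠ (1, j1) → v ≠ (1, j) → g v = f v := by
    intro v hv1 hv2; simp [hgdef, hv1, hv2]
  have hemp : ∀ v, g v = ∅ → f v = ∅ := by
    intro v hv
    by_cases e1 : v = (1, j1)
    · subst e1; rw [hg1] at hv; exact absurd hv (by decide)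
    · by_cases e2 : v = (1, j)
      · subst e2; rw [hg2] at hv; exact absurd hv (by decide)
      · rwa [hgoth v e1 e2] at hv
  have hmono : ∀ v, f v ≠ ∅ → g v ≠ ∅ := by
    intro v hv
    by_cases e1 : v = (1, j1)
    · subst e1; rw [hg1]; decide
    · by_cases e2 : v = (1, j)
      · subst e2; rw [hg2]; decide
      · rwa [hgoth v e1 e2]
  have hg : IsTkRDF 3 (pathProdAdj 2 n) g := by
    refine trdf_of_local hf hmono hemp ?_ ?_
    · intro v hv c u hadj hc
      by_cases e1 : u = (1, j1)
      · subst e1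
        have hvj := tr3_out1 hj1 hadj
        rw [hvj, hg2] at hv
        exact absurd hv (by decide)
      · by_cases e2 : u = (1, j)
        · subst e2; rw [h1] at hc; exact absurd hc (by simp)
        · exact ⟨u, hadj, by rwa [hgoth u e1 e2]⟩
    · intro v hv hfv
      by_cases e2 : v = (1, j)
      · subst e2
        exact ⟨(1, j1), hnejj', by rw [hg1]; decide, Or.inl (tr3_adj_h hj1 1)⟩
      · by_cases e1 : v = (1, j1)
        · subst e1; rw [hA1] at hfv; exact absurd hfv (by decide)
        · rw [hgoth v e1 e2] at hv; exact absurd hfv hv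
  obtain ⟨R, hRg, hRf⟩ := tr3_sum_split (fun v => (f v).card) (fun v => (g v).card)
      {(1, j1), (1, j)} (by
        intro v hv
        simp only [Finset.mem_insert, Finset.mem_singleton] at hv
        push_neg at hv
        show (g v).card = (f v).card
        rw [hgoth v hv.1 hv.2])
  have hSg : ∑ v ∈ ({(1, j1), (1, j)} : Finset (Fin 2 × Fin n)), (g v).card = 3 := by
    rw [Finset.sum_pair hnejj', hg1, hg2]; decide
  have hSf : ∑ v ∈ ({(1, j1), (1, j)} : Finset (Fin 2 × Fin n)), (f v).card = 3 := by
    rw [Finset.sum_pair hnejj', hA1, h1]; decide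
  have hsum : ∑ v, (g v).card = ∑ v, (f v).card := by
    rw [hRg, hRf, hSg, hSf]
  have hlt := tr3_card_lt f g hemp (1, j) h1 (by rw [hg2]; decide)
  have := he g hg hsum
  omega

/-- Case B1: f(0,j) = ∅, f(1,j) ≠ ∅. -/
lemma tr3_caseB1 {n : ℕ} (f : Fin 2 × Fin n → Finset (Fin 3))
    (hf : IsTkRDF 3 (pathProdAdj 2 n) f)
    (he : ∀ g : Fin 2 × Fin n → Finset (Fin 3), IsTkRDF 3 (pathProdAdj 2 n) g →
      ∑ v, (g v).card = ∑ v, (f v).card →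
      (Finset.univ.filter fun v => f v = ∅).card ≤
        (Finset.univ.filter fun v => g v = ∅).card)
    (j j1 : Fin n) (hj1 : (j1 : ℕ) + 1 = (j : ℕ))
    (h0 : f (0, j) = ∅) (h1 : f (1, j) ≠ ∅) : False := by
  classical
  have hA0 : f (0, j1) = Finset.univ := by
    rw [Finset.eq_univ_iff_forall]
    intro c
    obtain ⟨u, hu, hc⟩ := hf.1 (0, j) h0 c
    rwa [tr3_in0 hj1 hu] at hc
  -- distinctness
  have hneA : ((0, j) : Fin 2 × Fin n) ≠ (0, j1) := by
    intro h
    have := congrArg (fun p => ((p.2 : Fin n) : ℕ)) h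
    simp only at this
    omega
  have hneB : ((1, j1) : Fin 2 × Fin n) ≠ (0, j1) := by
    intro h
    have := congrArg (fun p => ((p.1 : Fin 2) : ℕ)) h
    simp only [Fin.val_one, Fin.val_zero] at this
    omega
  have hneC : ((1, j1) : Fin 2 × Fin n) ≠ (0, j) := by
    intro h
    have := congrArg (fun p => ((p.1 : Fin 2) : ℕ)) h
    simp only [Fin.val_one, Fin.val_zero] at this
    omega
  have hneD : ((1, j) : Fin 2 × Fin n) ≠ (0, j1) := by
    intro h
    have := congrArg (fun p => ((p.1 : Fin 2) : ℕ)) h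
    simp only [Fin.val_one, Fin.val_zero] at this
    omega
  have hneE : ((1, j) : Fin 2 × Fin n) ≠ (0, j) := by
    intro h
    have := congrArg (fun p => ((p.1 : Fin 2) : ℕ)) h
    simp only [Fin.val_one, Fin.val_zero] at this
    omega
  have hneF : ((1, j) : Fin 2 × Fin n) ≠ (1, j1) := by
    intro h
    have := congrArg (fun p => ((p.2 : Fin n) : ℕ)) h
    simp only at this
    omega
  by_cases hb : f (1, j1) = ∅
  · -- B1b : g(0,j1)={0}, g(1,j1)={1}, g(0,j)={2}
    set g : Fin 2 × Fin n → Finset (Fin 3) :=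
      fun v => if v = (0, j1) then {0} else if v = (1, j1) then {1}
        else if v = (0, j) then {2} else f v with hgdef
    have hg1 : g (0, j1) = {0} := by simp [hgdef]
    have hg2 : g (1, j1) = {1} := by simp [hgdef, hneB]
    have hg3 : g (0, j) = {2} := by simp [hgdef, hneA, hneC.symm]
    have hgoth : ∀ v, v ≠ (0, j1) → v ≠ (1, j1) → v ≠ (0, j) → g v = f v := by
      intro v hv1 hv2 hv3; simp [hgdef, hv1, hv2, hv3]
    have hemp : ∀ v, g v = ∅ → f v = ∅ := by
      intro v hv
      by_cases e1 : v = (0, j1)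
      · subst e1; rw [hg1] at hv; exact absurd hv (by decide)
      · by_cases e2 : v = (1, j1)
        · subst e2; rw [hg2] at hv; exact absurd hv (by decide)
        · by_cases e3 : v = (0, j)
          · subst e3; rw [hg3] at hv; exact absurd hv (by decide)
          · rwa [hgoth v e1 e2 e3] at hv
    have hmono : ∀ v, f v ≠ ∅ → g v ≠ ∅ := by
      intro v hv
      by_cases e1 : v = (0, j1)
      · subst e1; rw [hg1]; decide
      · by_cases e2 : v = (1, j1)
        · subst e2; rw [hg2]; decide
        · by_cases e3 : v = (0, j)
          · subst e3; rw [hg3]; decide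
          · rwa [hgoth v e1 e2 e3]
    have hg : IsTkRDF 3 (pathProdAdj 2 n) g := by
      refine trdf_of_local hf hmono hemp ?_ ?_
      · intro v hv c u hadj hc
        by_cases e1 : u = (0, j1)
        · subst e1
          rcases tr3_out0 hj1 hadj with h | h
          · rw [h, hg2] at hv; exact absurd hv (by decide)
          · rw [h, hg3] at hv; exact absurd hv (by decide)
        · by_cases e2 : u = (1, j1)
          · subst e2; rw [hb] at hc; exact absurd hc (by simp)
          · by_cases e3 : u = (0, j)
            · subst e3; rw [h0] at hc; exact absurd hc (by simp)
            · exact ⟨u, hadj, by rwa [hgoth u e1 e2 e3]⟩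
      · intro v hv hfv
        by_cases e2 : v = (1, j1)
        · subst e2
          exact ⟨(0, j1), hneB.symm, by rw [hg1]; decide, Or.inl (tr3_adj_v j1)⟩
        · by_cases e3 : v = (0, j)
          · subst e3
            exact ⟨(0, j1), hneA.symm, by rw [hg1]; decide,
              Or.inl (tr3_adj_h hj1 0)⟩
          · by_cases e1 : v = (0, j1)
            · subst e1; rw [hA0] at hfv; exact absurd hfv (by decide)
            · rw [hgoth v e1 e2 e3] at hv; exact absurd hfv hv
    have hnotmemS : ((0, j1) : Fin 2 × Fin n) ∉ ({(1, j1), (0, j)} : Finset (Fin 2 × Fin n)) := by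
      simp only [Finset.mem_insert, Finset.mem_singleton]
      push_neg
      exact ⟨Ne.symm hneB, Ne.symm hneA⟩
    obtain ⟨R, hRg, hRf⟩ := tr3_sum_split (fun v => (f v).card) (fun v => (g v).card)
        {(0, j1), (1, j1), (0, j)} (by
          intro v hv
          simp only [Finset.mem_insert, Finset.mem_singleton] at hv
          push_neg at hv
          show (g v).card = (f v).card
          rw [hgoth v hv.1 hv.2.1 hv.2.2])
    have hSg : ∑ v ∈ ({(0, j1), (1, j1), (0, j)} : Finset (Fin 2 × Fin n)), (g v).card = 3 := by
      rw [Finset.sum_insert hnotmemS, Finset.sum_pair hneC, hg1, hg2, hg3]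
      decide
    have hSf : ∑ v ∈ ({(0, j1), (1, j1), (0, j)} : Finset (Fin 2 × Fin n)), (f v).card = 3 := by
      rw [Finset.sum_insert hnotmemS, Finset.sum_pair hneC, hA0, hb, h0]
      decide
    have hsum : ∑ v, (g v).card = ∑ v, (f v).card := by rw [hRg, hRf, hSg, hSf]
    have hlt := tr3_card_lt f g hemp (0, j) h0 (by rw [hg3]; decide)
    have := he g hg hsum
    omega
  · -- B1a : g(0,j1)={0,1}, g(0,j)={2}
    set g : Fin 2 × Fin n → Finset (Fin 3) :=
      fun v => if v = (0, j1) then {0, 1} else if v = (0, j) then {2} else f v with hgdef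
    have hg1 : g (0, j1) = {0, 1} := by simp [hgdef]
    have hg3 : g (0, j) = {2} := by simp [hgdef, hneA]
    have hgoth : ∀ v, v ≠ (0, j1) → v ≠ (0, j) → g v = f v := by
      intro v hv1 hv3; simp [hgdef, hv1, hv3]
    have hemp : ∀ v, g v = ∅ → f v = ∅ := by
      intro v hv
      by_cases e1 : v = (0, j1)
      · subst e1; rw [hg1] at hv; exact absurd hv (by decide)
      · by_cases e3 : v = (0, j)
        · subst e3; rw [hg3] at hv; exact absurd hv (by decide)
        · rwa [hgoth v e1 e3] at hv
    have hmono : ∀ v, f v ≠ ∅ → g v ≠ ∅ := by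
      intro v hv
      by_cases e1 : v = (0, j1)
      · subst e1; rw [hg1]; decide
      · by_cases e3 : v = (0, j)
        · subst e3; rw [hg3]; decide
        · rwa [hgoth v e1 e3]
    have hg : IsTkRDF 3 (pathProdAdj 2 n) g := by
      refine trdf_of_local hf hmono hemp ?_ ?_
      · intro v hv c u hadj hc
        by_cases e1 : u = (0, j1)
        · subst e1
          rcases tr3_out0 hj1 hadj with h | h
          · rw [h, hgoth (1, j1) hneB hneC] at hv
            exact absurd hv hb
          · rw [h, hg3] at hv; exact absurd hv (by decide)
        · by_cases e3 : u = (0, j)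
          · subst e3; rw [h0] at hc; exact absurd hc (by simp)
          · exact ⟨u, hadj, by rwa [hgoth u e1 e3]⟩
      · intro v hv hfv
        by_cases e3 : v = (0, j)
        · subst e3
          exact ⟨(0, j1), hneA.symm, by rw [hg1]; decide,
            Or.inl (tr3_adj_h hj1 0)⟩
        · by_cases e1 : v = (0, j1)
          · subst e1; rw [hA0] at hfv; exact absurd hfv (by decide)
          · rw [hgoth v e1 e3] at hv; exact absurd hfv hv
    have hneA' : ((0, j1) : Fin 2 × Fin n) ≠ (0, j) := hneA.symm
    obtain ⟨R, hRg, hRf⟩ := tr3_sum_split (fun v => (f v).card) (fun v => (g v).card)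
        {(0, j1), (0, j)} (by
          intro v hv
          simp only [Finset.mem_insert, Finset.mem_singleton] at hv
          push_neg at hv
          show (g v).card = (f v).card
          rw [hgoth v hv.1 hv.2])
    have hSg : ∑ v ∈ ({(0, j1), (0, j)} : Finset (Fin 2 × Fin n)), (g v).card = 3 := by
      rw [Finset.sum_pair hneA', hg1, hg3]; decide
    have hSf : ∑ v ∈ ({(0, j1), (0, j)} : Finset (Fin 2 × Fin n)), (f v).card = 3 := by
      rw [Finset.sum_pair hneA', hA0, h0]; decide
    have hsum : ∑ v, (g v).card = ∑ v, (f v).card := by rw [hRg, hRf, hSg, hSf]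
    have hlt := tr3_card_lt f g hemp (0, j) h0 (by rw [hg3]; decide)
    have := he g hg hsum
    omega

/-- Case B2: f(1,j) = ∅, f(0,j) has exactly one element. -/
lemma tr3_caseB2 {n : ℕ} (f : Fin 2 × Fin n → Finset (Fin 3))
    (hf : IsTkRDF 3 (pathProdAdj 2 n) f)
    (hw : ∀ g : Fin 2 × Fin n → Finset (Fin 3), IsTkRDF 3 (pathProdAdj 2 n) g →
      ∑ v, (f v).card ≤ ∑ v, (g v).card)
    (he : ∀ g : Fin 2 × Fin n → Finset (Fin 3), IsTkRDF 3 (pathProdAdj 2 n) g →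
      ∑ v, (g v).card = ∑ v, (f v).card →
      (Finset.univ.filter fun v => f v = ∅).card ≤
        (Finset.univ.filter fun v => g v = ∅).card)
    (j j1 : Fin n) (hj1 : (j1 : ℕ) + 1 = (j : ℕ))
    (h1 : f (1, j) = ∅) (h0c : (f (0, j)).card = 1) : False := by
  classical
  have h3 : (Finset.univ : Finset (Fin 3)).card = 3 := rfl
  -- coverage of (1, j)
  have hcov : ∀ c : Fin 3, c ∈ f (1, j1) ∨ c ∈ f (0, j) := by
    intro c
    obtain ⟨u, hu, hc⟩ := hf.1 (1, j) h1 c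
    rcases tr3_in1 hj1 hu with h | h
    · left; rwa [h] at hc
    · right; rwa [h] at hc
  have hcard2 : 2 ≤ (f (1, j1)).card := by
    have hsub : Finset.univ ⊆ f (1, j1) ∪ f (0, j) := fun c _ =>
      Finset.mem_union.mpr (hcov c)
    have hle := Finset.card_le_card hsub
    have hun := Finset.card_union_le (f (1, j1)) (f (0, j))
    omega
  have hcard3 : (f (1, j1)).card ≤ 3 := by
    have := Finset.card_le_univ (f (1, j1))
    rwa [Fintype.card_fin] at this
  -- distinctness
  have hneF : ((1, j) : Fin 2 × Fin n) ≠ (1, j1) := by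
    intro h
    have := congrArg (fun p => ((p.2 : Fin n) : ℕ)) h
    simp only at this
    omega
  have hne0 : ((0, j) : Fin 2 × Fin n) ≠ (1, j1) := by
    intro h
    have := congrArg (fun p => ((p.1 : Fin 2) : ℕ)) h
    simp only [Fin.val_one, Fin.val_zero] at this
    omega
  have hne0' : ((0, j) : Fin 2 × Fin n) ≠ (1, j) := by
    intro h
    have := congrArg (fun p => ((p.1 : Fin 2) : ℕ)) h
    simp only [Fin.val_one, Fin.val_zero] at this
    omega
  by_cases hc3 : (f (1, j1)).card = 3
  · -- B2a : weight can be decreased, contradiction with hw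
    have hA : f (1, j1) = Finset.univ := by
      apply Finset.eq_univ_of_card
      rw [hc3]; rfl
    set g : Fin 2 × Fin n → Finset (Fin 3) :=
      fun v => if v = (1, j1) then Finset.univ \ f (0, j) else f v with hgdef
    have hg1 : g (1, j1) = Finset.univ \ f (0, j) := by simp [hgdef]
    have hgoth : ∀ v, v ≠ (1, j1) → g v = f v := by
      intro v hv1; simp [hgdef, hv1]
    have hgcard : (g (1, j1)).card = 2 := by
      rw [hg1, Finset.card_sdiff_of_subset (Finset.subset_univ _), h3, h0c]
    have hg1ne : g (1, j1) ≠ ∅ := by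
      intro h
      rw [h] at hgcard
      simp at hgcard
    have hemp : ∀ v, g v = ∅ → f v = ∅ := by
      intro v hv
      by_cases e1 : v = (1, j1)
      · subst e1; exact absurd hv hg1ne
      · rwa [hgoth v e1] at hv
    have hmono : ∀ v, f v ≠ ∅ → g v ≠ ∅ := by
      intro v hv
      by_cases e1 : v = (1, j1)
      · subst e1; exact hg1ne
      · rwa [hgoth v e1]
    have hg : IsTkRDF 3 (pathProdAdj 2 n) g := by
      refine trdf_of_local hf hmono hemp ?_ ?_
      · intro v hv c u hadj hc
        by_cases e1 : u = (1, j1)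
        · subst e1
          have hvj := tr3_out1 hj1 hadj
          subst hvj
          by_cases hcj : c ∈ f (0, j)
          · exact ⟨(0, j), tr3_adj_v j, by rwa [hgoth (0, j) hne0]⟩
          · exact ⟨(1, j1), hadj, by
              rw [hg1]
              exact Finset.mem_sdiff.mpr ⟨Finset.mem_univ c, hcj⟩⟩
        · exact ⟨u, hadj, by rwa [hgoth u e1]⟩
      · intro v hv hfv
        by_cases e1 : v = (1, j1)
        · subst e1; rw [hA] at hfv; exact absurd hfv (by decide)
        · rw [hgoth v e1] at hv; exact absurd hfv hv
    obtain ⟨R, hRg, hRf⟩ := tr3_sum_split (fun v => (f v).card) (fun v => (g v).card)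
        {(1, j1)} (by
          intro v hv
          simp only [Finset.mem_singleton] at hv
          show (g v).card = (f v).card
          rw [hgoth v hv])
    rw [Finset.sum_singleton] at hRg hRf
    have := hw g hg
    rw [hRg, hRf, hgcard, hc3] at this
    omega
  · -- B2b : card f(1,j1) = 2; same weight, fewer empties
    have hc2 : (f (1, j1)).card = 2 := by omega
    obtain ⟨a, ha⟩ : ∃ a, a ∈ f (1, j1) := by
      have : (f (1, j1)).Nonempty := Finset.card_pos.mp (by omega)
      exact this
    have hfne : f (1, j1) ≠ ∅ := by
      intro h
      rw [h] at hc2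
      simp at hc2
    set g : Fin 2 × Fin n → Finset (Fin 3) :=
      fun v => if v = (1, j1) then {a} else if v = (1, j) then f (1, j1) \ {a} else f v
      with hgdef
    have hg1 : g (1, j1) = {a} := by simp [hgdef]
    have hg2 : g (1, j) = f (1, j1) \ {a} := by simp [hgdef, hneF]
    have hgoth : ∀ v, v ≠ (1, j1) → v ≠ (1, j) → g v = f v := by
      intro v hv1 hv2; simp [hgdef, hv1, hv2]
    have hg2card : (g (1, j)).card = 1 := by
      rw [hg2, Finset.card_sdiff_of_subset (Finset.singleton_subset_iff.mpr ha), hc2, Finset.card_singleton]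
    have hg2ne : g (1, j) ≠ ∅ := by
      intro h
      rw [h] at hg2card
      simp at hg2card
    have hemp : ∀ v, g v = ∅ → f v = ∅ := by
      intro v hv
      by_cases e1 : v = (1, j1)
      · subst e1; rw [hg1] at hv; exact absurd hv (Finset.singleton_ne_empty a)
      · by_cases e2 : v = (1, j)
        · subst e2; exact absurd hv hg2ne
        · rwa [hgoth v e1 e2] at hv
    have hmono : ∀ v, f v ≠ ∅ → g v ≠ ∅ := by
      intro v hv
      by_cases e1 : v = (1, j1)
      · subst e1; rw [hg1]; exact Finset.singleton_ne_empty a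
      · by_cases e2 : v = (1, j)
        · subst e2; exact hg2ne
        · rwa [hgoth v e1 e2]
    have hg : IsTkRDF 3 (pathProdAdj 2 n) g := by
      refine trdf_of_local hf hmono hemp ?_ ?_
      · intro v hv c u hadj hc
        by_cases e1 : u = (1, j1)
        · subst e1
          have hvj := tr3_out1 hj1 hadj
          subst hvj
          exact absurd hv hg2ne
        · by_cases e2 : u = (1, j)
          · subst e2; rw [h1] at hc; exact absurd hc (by simp)
          · exact ⟨u, hadj, by rwa [hgoth u e1 e2]⟩
      · intro v hv hfv
        by_cases e2 : v = (1, j)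
        · subst e2
          exact ⟨(1, j1), hneF.symm, by rw [hg1]; exact Finset.singleton_ne_empty a,
            Or.inl (tr3_adj_h hj1 1)⟩
        · by_cases e1 : v = (1, j1)
          · subst e1; exact absurd hfv hfne
          · rw [hgoth v e1 e2] at hv; exact absurd hfv hv
    have hneF' : ((1, j1) : Fin 2 × Fin n) ≠ (1, j) := hneF.symm
    obtain ⟨R, hRg, hRf⟩ := tr3_sum_split (fun v => (f v).card) (fun v => (g v).card)
        {(1, j1), (1, j)} (by
          intro v hv
          simp only [Finset.mem_insert, Finset.mem_singleton] at hv
          push_neg at hv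
          show (g v).card = (f v).card
          rw [hgoth v hv.1 hv.2])
    have hSg : ∑ v ∈ ({(1, j1), (1, j)} : Finset (Fin 2 × Fin n)), (g v).card = 2 := by
      rw [Finset.sum_pair hneF', hg2card, hg1, Finset.card_singleton]
    have hSf : ∑ v ∈ ({(1, j1), (1, j)} : Finset (Fin 2 × Fin n)), (f v).card = 2 := by
      rw [Finset.sum_pair hneF', hc2, h1, Finset.card_empty]
    have hsum : ∑ v, (g v).card = ∑ v, (f v).card := by rw [hRg, hRf, hSg, hSf]
    have hlt := tr3_card_lt f g hemp (1, j) h1 hg2ne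
    have := he g hg hsum
    omega

theorem tr3_P2_Pn_columns (n : ℕ) (hn : 2 ≤ n)
    (f : Fin 2 × Fin n → Finset (Fin 3))
    (hf : IsTkRDF 3 (pathProdAdj 2 n) f)
    (hw : ∀ g : Fin 2 × Fin n → Finset (Fin 3), IsTkRDF 3 (pathProdAdj 2 n) g →
      ∑ v, (f v).card ≤ ∑ v, (g v).card)
    (he : ∀ g : Fin 2 × Fin n → Finset (Fin 3), IsTkRDF 3 (pathProdAdj 2 n) g →
      ∑ v, (g v).card = ∑ v, (f v).card →
      (Finset.univ.filter fun v => f v = ∅).card ≤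
        (Finset.univ.filter fun v => g v = ∅).card) :
    ∀ j : Fin n, 2 ≤ (f (0, j)).card + (f (1, j)).card := by
  intro j
  by_contra hcol
  push_neg at hcol
  by_cases h0 : f (0, j) = ∅
  · -- column j has an empty top cell, so j ≥ 1 and we apply case A or B1
    have hjpos : 1 ≤ (j : ℕ) := by
      obtain ⟨u, hu, _⟩ := hf.1 (0, j) h0 0
      obtain ⟨a, b⟩ := u
      rcases hu with ⟨e1, e2⟩ | ⟨e1, e2⟩
      · simp only at e2; omega
      · simp only [Fin.val_zero] at e2; omega
    obtain ⟨j1, hj1⟩ : ∃ j1 : Fin n, (j1 : ℕ) + 1 = (j : ℕ) :=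
      ⟨⟨(j : ℕ) - 1, by omega⟩, by show (j : ℕ) - 1 + 1 = (j : ℕ); omega⟩
    by_cases h1 : f (1, j) = ∅
    · exact tr3_caseA f hf he j j1 hj1 h0 h1
    · exact tr3_caseB1 f hf he j j1 hj1 h0 h1
  · -- f(0,j) is a singleton and f(1,j) = ∅
    have h0pos : 1 ≤ (f (0, j)).card :=
      Finset.card_pos.mpr (Finset.nonempty_iff_ne_empty.mpr h0)
    have h0c : (f (0, j)).card = 1 := by omega
    have h1 : f (1, j) = ∅ := by
      rw [← Finset.card_eq_zero]; omega
    have hjpos : 1 ≤ (j : ℕ) := by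
      by_contra hp
      push_neg at hp
      have hj0 : (j : ℕ) = 0 := by omega
      have hall : ∀ c : Fin 3, c ∈ f (0, j) := by
        intro c
        obtain ⟨u, hu, hc⟩ := hf.1 (1, j) h1 c
        rwa [tr3_nin1 hj0 hu] at hc
      have hsub : Finset.univ ⊆ f (0, j) := fun c _ => hall c
      have hge := Finset.card_le_card hsub
      have h3 : (Finset.univ : Finset (Fin 3)).card = 3 := rfl
      omega
    obtain ⟨j1, hj1⟩ : ∃ j1 : Fin n, (j1 : ℕ) + 1 = (j : ℕ) :=
      ⟨⟨(j : ℕ) - 1, by omega⟩, by show (j : ℕ) - 1 + 1 = (j : ℕ); omega⟩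
    exact tr3_caseB2 f hf hw he j j1 hj1 h1 h0c
end
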